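/- arXiv:2003.08722 — 7 statements merged into one kernel-verified Lean document; each statement's English description precedes it below -/
import Mathlib

section
/- (Brauer's theorem) Let A be an n×n complex matrix whose characteristic polynomial equals ∏_{i=1}^n (X − λ_i), let v ∈ ℂⁿ be an eigenvector of A associated with the eigenvalue λ_k (i.e. A·v = λ_k·v), and let q ∈ ℂⁿ be any vector. Then the characteristic polynomial of the rank-one update A + v·qᵀ equals (X − (λ_k + qᵀv)) · ∏_{i≠k} (X − λ_i); that is, A + v·qᵀ has eigenvalues λ_1, …, λ_{k−1}, λ_k + vᵀq, λ_{k+1}, …, λ_n counted with algebraic multiplicity. -/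
/-!
If `M x = u`, then `M + u wᵀ = M (1 + x wᵀ)`, so `det (M + u wᵀ) = det M · (1 + wᵀx)`.
Apply this to `M = X·I - A` and `u = -v` over the field of rational functions: since
`A v = λ_k v`, one may take `x = -(X - λ_k)⁻¹ v`, giving
`(X - λ_k) · charpoly (A + v qᵀ) = charpoly A · (X - λ_k - qᵀv)`.
Cancelling the factor `X - λ_k` of `charpoly A` gives the theorem.
-/

open Polynomial Matrix Finset

namespace Matrix

theorem map_vecMulVec {m n R S F : Type*} [Mul R] [Mul S] [FunLike F R S] [MulHomClass F R S]
    (f : F) (u : m → R) (w : n → R) : (vecMulVec u w).map f = vecMulVec (f ∘ u) (f ∘ w) := by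
  ext
  simp [vecMulVec_apply]

variable {n : Type*} [Fintype n] [DecidableEq n] {R : Type*} [CommRing R]

theorem det_add_vecMulVec_of_mulVec_eq {M : Matrix n n R} {x u : n → R} (hx : M *ᵥ x = u)
    (w : n → R) : (M + vecMulVec u w).det = M.det * (1 + w ⬝ᵥ x) := by
  rw [← hx, ← mul_vecMulVec,
    show M + M * vecMulVec x w = M * (1 + vecMulVec x w) by rw [Matrix.mul_add, Matrix.mul_one],
    det_mul, vecMulVec_eq (Fin 1), det_one_add_replicateCol_mul_replicateRow]

theorem det_add_vecMulVec_mul_of_mulVec_eq_smul [IsDomain R] {M : Matrix n n R} {u : n → R}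
    {μ : R} (hμ : μ ≠ 0) (hu : M *ᵥ u = μ • u) (w : n → R) :
    (M + vecMulVec u w).det * μ = M.det * (μ + w ⬝ᵥ u) := by
  let f := algebraMap R (FractionRing R)
  have hf : Function.Injective f := IsFractionRing.injective R (FractionRing R)
  have hfμ : f μ ≠ 0 := (map_ne_zero_iff f hf).mpr hμ
  have hx : M.map f *ᵥ ((f μ)⁻¹ • (f ∘ u)) = f ∘ u := by
    ext i
    rw [mulVec_smul, Pi.smul_apply, ← f.map_mulVec, hu]
    simp [hfμ]
  apply hf
  rw [map_mul, map_mul, f.map_det, f.map_det, RingHom.mapMatrix_apply, RingHom.mapMatrix_apply,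
    Matrix.map_add _ f.map_add, map_vecMulVec, det_add_vecMulVec_of_mulVec_eq hx, f.map_add,
    f.map_dotProduct, dotProduct_smul, smul_eq_mul]
  field_simp

theorem charmatrix_add (A B : Matrix n n R) :
    (A + B).charmatrix = A.charmatrix - C.mapMatrix B := by
  rw [charmatrix, charmatrix, map_add, sub_add_eq_sub_sub]

theorem charmatrix_mulVec_of_mulVec_eq_smul {A : Matrix n n R} {v : n → R} {a : R}
    (hv : A *ᵥ v = a • v) : A.charmatrix *ᵥ (C ∘ v) = (X - C a) • (C ∘ v) := by
  ext i
  rw [charmatrix, sub_mulVec, Pi.sub_apply, RingHom.mapMatrix_apply, ← C.map_mulVec, hv]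
  simp [sub_mul]

theorem charpoly_add_vecMulVec_mul [IsDomain R] {A : Matrix n n R} {v : n → R} {a : R}
    (hv : A *ᵥ v = a • v) (q : n → R) :
    (A + vecMulVec v q).charpoly * (X - C a) = A.charpoly * (X - C (a + q ⬝ᵥ v)) := by
  have hu : A.charmatrix *ᵥ (-(C ∘ v)) = (X - C a) • -(C ∘ v) := by
    rw [mulVec_neg, smul_neg, charmatrix_mulVec_of_mulVec_eq_smul hv]
  rw [charpoly, charmatrix_add, RingHom.mapMatrix_apply, map_vecMulVec, sub_eq_add_neg,
    ← neg_vecMulVec, det_add_vecMulVec_mul_of_mulVec_eq_smul (X_sub_C_ne_zero a) hu, charpoly,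
    dotProduct_neg, ← RingHom.map_dotProduct, map_add]
  ring

end Matrix

theorem brauer_general (n : ℕ) (A : Matrix (Fin n) (Fin n) ℂ) (l : Fin n → ℂ)
    (hA : A.charpoly = ∏ i, (X - C (l i)))
    (k : Fin n) (v : Fin n → ℂ) (hAv : A.mulVec v = l k • v)
    (q : Fin n → ℂ) :
    (A + vecMulVec v q).charpoly =
      (X - C (l k + ∑ i, q i * v i)) * ∏ i ∈ univ.erase k, (X - C (l i)) := by
  have h := charpoly_add_vecMulVec_mul hAv q
  rw [hA, ← mul_prod_erase univ _ (mem_univ k)] at h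
  refine mul_right_cancel₀ (X_sub_C_ne_zero (l k)) ?_
  rw [h, dotProduct]
  ring

/-- **Brauer's theorem.** Adding the rank-one update `v qᵀ` to `A`, where `v` is an
eigenvector of `A` for the eigenvalue `λ_k`, moves the eigenvalue `λ_k` to
`λ_k + qᵀv` and leaves the other eigenvalues unchanged. -/
theorem brauer (n : ℕ) (A : Matrix (Fin n) (Fin n) ℂ) (l : Fin n → ℂ)
    (hA : A.charpoly = ∏ i, (X - C (l i)))
    (k : Fin n) (v : Fin n → ℂ) (hv : v ≠ 0) (hAv : A.mulVec v = l k • v)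
    (q : Fin n → ℂ) :
    (A + vecMulVec v q).charpoly =
      (X - C (l k + ∑ i, q i * v i)) * ∏ i ∈ univ.erase k, (X - C (l i)) :=
  brauer_general n A l hA k v hAv q
end

section
/- (Rado's theorem) Let A be an n×n complex matrix whose characteristic polynomial equals ∏_{i=1}^n (X − λ_i). Let X be an n×r complex matrix of rank r (r ≤ n) whose columns x_1, …, x_r satisfy A·x_i = λ_i·x_i for i = 1, …, r, and let C be an arbitrary r×n complex matrix. Then the characteristic polynomial of A + X·C equals the characteristic polynomial of the r×r matrix Ω + C·X multiplied by ∏_{i=r+1}^n (X − λ_i), where Ω = diag(λ_1, …, λ_r); that is, A + X·C has eigenvalues μ_1, …, μ_r, λ_{r+1}, …, λ_n, where μ_1, …, μ_r are the eigenvalues of Ω + C·X. -/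
/-!
Put `B = X·I - A` and `D = X·I - Ω`, so that `A·Xm = Xm·Ω` becomes `B·Xm = Xm·D`. Over the
field of fractions of `ℂ[X]` the matrix `B` is invertible, and the Weinstein–Aronszajn identity
gives `det (B - Xm·Cm) = det B · det (1 - Cm·B⁻¹·Xm)`. Since `B⁻¹·Xm·D = Xm`, multiplying by
`det D` yields `χ(A + Xm·Cm) · χ(Ω) = χ(A) · χ(Ω + Cm·Xm)`; cancelling `χ(Ω) = ∏_{i<r} (X - λ_i)`
from `χ(A) = ∏_i (X - λ_i)` gives the theorem.
-/

open Polynomial Matrix Finset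

namespace Matrix

variable {m n : Type*} [Fintype m] [Fintype n] [DecidableEq n]

theorem det_sub_mul_mul_det_of_mul_eq_mul [DecidableEq m] {α : Type*} [CommRing α]
    {B : Matrix n n α} {D : Matrix m m α} {U : Matrix n m α} (hB : IsUnit B.det)
    (hBU : B * U = U * D) (V : Matrix m n α) :
    (B - U * V).det * D.det = B.det * (D - V * U).det := by
  have hU : B⁻¹ * U * D = U := by
    rw [Matrix.mul_assoc, ← hBU, ← Matrix.mul_assoc, nonsing_inv_mul _ hB, Matrix.one_mul]
  calc (B - U * V).det * D.det
      = B.det * (1 - V * (B⁻¹ * U)).det * D.det := by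
        rw [← det_one_sub_mul_comm, ← det_mul, Matrix.mul_sub, Matrix.mul_one,
          ← Matrix.mul_assoc, ← Matrix.mul_assoc, mul_nonsing_inv _ hB, Matrix.one_mul]
    _ = B.det * (D - V * U).det := by
        rw [mul_assoc, ← det_mul, Matrix.sub_mul, Matrix.one_mul, Matrix.mul_assoc V, hU]

variable {R : Type*} [CommRing R]

theorem charmatrix_add_mul (A : Matrix n n R) (U : Matrix n m R) (V : Matrix m n R) :
    charmatrix (A + U * V) = charmatrix A - U.map C * V.map C := by
  rw [charmatrix, charmatrix, map_add, RingHom.mapMatrix_apply (M := U * V), Matrix.map_mul,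
    sub_add_eq_sub_sub]

theorem charmatrix_mul_map_C_of_mul_eq_mul [DecidableEq m] {A : Matrix n n R}
    {D : Matrix m m R} {U : Matrix n m R} (h : A * U = U * D) :
    charmatrix A * U.map C = U.map C * charmatrix D := by
  -- the type ascriptions keep elaboration from picking the `CStarMatrix` multiplication
  have hX : (scalar n X : Matrix n n R[X]) * U.map C =
      U.map C * (scalar m X : Matrix m m R[X]) := by
    rw [scalar_apply, scalar_apply, ← smul_eq_diagonal_mul, ← op_smul_eq_mul_diagonal,
      op_smul_eq_smul]
  rw [charmatrix, charmatrix, Matrix.sub_mul, Matrix.mul_sub, hX, RingHom.mapMatrix_apply,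
    RingHom.mapMatrix_apply, ← Matrix.map_mul, ← Matrix.map_mul, h]

theorem charpoly_add_mul_mul_charpoly_of_mul_eq_mul [DecidableEq m] [IsDomain R]
    {A : Matrix n n R} {D : Matrix m m R} {U : Matrix n m R} (h : A * U = U * D)
    (V : Matrix m n R) :
    (A + U * V).charpoly * D.charpoly = A.charpoly * (D + V * U).charpoly := by
  let f := algebraMap R[X] (FractionRing R[X])
  have hA : IsUnit (f.mapMatrix (charmatrix A)).det := by
    rw [← RingHom.map_det, isUnit_iff_ne_zero, map_ne_zero_iff f (IsFractionRing.injective _ _)]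
    exact (charpoly_monic A).ne_zero
  have hAU : f.mapMatrix (charmatrix A) * (U.map C).map f =
      (U.map C).map f * f.mapMatrix (charmatrix D) := by
    simp only [RingHom.mapMatrix_apply, ← Matrix.map_mul, charmatrix_mul_map_C_of_mul_eq_mul h]
  apply IsFractionRing.injective R[X] (FractionRing R[X])
  simpa only [charpoly, charmatrix_add_mul, map_mul, RingHom.map_det, map_sub,
    RingHom.mapMatrix_apply, Matrix.map_mul] using
    det_sub_mul_mul_det_of_mul_eq_mul hA hAU ((V.map C).map f)

end Matrix

theorem Fin.prod_univ_eq_prod_castLE_mul_prod_filter_le {M : Type*} [CommMonoid M] {r n : ℕ}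
    (hr : r ≤ n) (f : Fin n → M) :
    ∏ i, f i = (∏ i : Fin r, f (Fin.castLE hr i)) *
      ∏ i ∈ univ.filter (fun i : Fin n => r ≤ (i : ℕ)), f i := by
  have hlow : univ.filter (fun i : Fin n => ¬ r ≤ (i : ℕ)) = univ.map (Fin.castLEEmb hr) := by
    ext i
    simpa using ⟨fun hi => ⟨⟨i, hi⟩, rfl⟩, fun ⟨j, hj⟩ => hj ▸ j.isLt⟩
  rw [← prod_filter_not_mul_prod_filter univ (fun i : Fin n => r ≤ (i : ℕ)), hlow, prod_map]
  rfl

theorem rado_general (n r : ℕ) (hr : r ≤ n) (A : Matrix (Fin n) (Fin n) ℂ) (l : Fin n → ℂ)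
    (hA : A.charpoly = ∏ i, (X - C (l i)))
    (Xm : Matrix (Fin n) (Fin r) ℂ)
    (hAX : A * Xm = Xm * Matrix.diagonal (fun i : Fin r => l (Fin.castLE hr i)))
    (Cm : Matrix (Fin r) (Fin n) ℂ) :
    (A + Xm * Cm).charpoly =
      (Matrix.diagonal (fun i : Fin r => l (Fin.castLE hr i)) + Cm * Xm).charpoly *
        ∏ i ∈ univ.filter (fun i : Fin n => r ≤ (i : ℕ)), (X - C (l i)) := by
  have key := charpoly_add_mul_mul_charpoly_of_mul_eq_mul hAX Cm
  rw [hA, Fin.prod_univ_eq_prod_castLE_mul_prod_filter_le hr, ← charpoly_diagonal] at key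
  exact mul_right_cancel₀ (charpoly_monic _).ne_zero (key.trans (by ring))

/-- **Rado's theorem.** If the columns of the rank-`r` matrix `Xm` are eigenvectors of
`A` for the eigenvalues `λ_1, …, λ_r`, then for any `r × n` matrix `Cm`, the matrix
`A + Xm·Cm` has eigenvalues `μ_1, …, μ_r, λ_{r+1}, …, λ_n`, where `μ_1, …, μ_r` are the
eigenvalues of `Ω + Cm·Xm` with `Ω = diag(λ_1, …, λ_r)`. -/
theorem rado (n r : ℕ) (hr : r ≤ n) (A : Matrix (Fin n) (Fin n) ℂ) (l : Fin n → ℂ)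
    (hA : A.charpoly = ∏ i, (X - C (l i)))
    (Xm : Matrix (Fin n) (Fin r) ℂ) (hrank : Xm.rank = r)
    (hAX : A * Xm = Xm * Matrix.diagonal (fun i : Fin r => l (Fin.castLE hr i)))
    (Cm : Matrix (Fin r) (Fin n) ℂ) :
    (A + Xm * Cm).charpoly =
      (Matrix.diagonal (fun i : Fin r => l (Fin.castLE hr i)) + Cm * Xm).charpoly *
        ∏ i ∈ univ.filter (fun i : Fin n => r ≤ (i : ℕ)), (X - C (l i)) :=
  rado_general n r hr A l hA Xm hAX Cm
end

section
/- Let Λ_1 = (α_1, α_2, …, α_n) and Λ_2 = (β_1, β_2, …, β_m) be realizable lists of complex numbers, with α_1 real, α_1 ≥ |α_i| for all i, and β_1 real, β_1 ≥ |β_j| for all j. Then for every ε ≥ max{β_1 − α_1, 0}, the list Λ = (α_1 + ε, β_1 − ε, α_2, …, α_n, β_2, …, β_m) of length n + m is realizable. -/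
/-!
Realize the joined list by the nonnegative block matrix `[[A, u vᵀ], [κ v uᵀ, B]]`, where `A`, `B`
realize the two lists and `u`, `v` are nonnegative eigenvectors for their Perron roots `a = α₁`,
`b = β₁`. A Schur complement computation gives its characteristic polynomial as
`χ_A χ_B ((X - a)(X - b) - c) / ((X - a)(X - b))` with `c = κ ‖u‖² ‖v‖²`, and the choice
`c = ε (ε + a - b) ≥ 0` turns `(X - a)(X - b) - c` into `(X - (a + ε))(X - (b - ε))`.

The Perron eigenvector comes from the resolvent: for `t > a` Gelfand's formula makes the Neumann
series `∑ Aᵏ / tᵏ⁺¹` converge, so `(t - A)⁻¹ ≥ 0` entrywise. Hence the polynomial matrix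
`χ_A(X) adj(X - A)` is entrywise nonnegative on `(a, ∞)`, and its lowest nonvanishing Taylor
coefficient at `a` is a nonzero nonnegative matrix whose columns lie in `ker (A - a)`.
-/

open Polynomial Matrix Finset

def Realizable {n : ℕ} (l : Fin n → ℂ) : Prop :=
  ∃ A : Matrix (Fin n) (Fin n) ℝ, (∀ i j, 0 ≤ A i j) ∧
    (A.map (Complex.ofReal)).charpoly = ∏ i, (X - C (l i))

open scoped ENNReal
open Filter Topology

theorem hasSum_pow_smul_pow_of_lt_inv_spectralRadius {A : Type*} [NormedRing A]
    [NormedAlgebra ℂ A] [CompleteSpace A] (a : A) {z : ℂ}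
    (hz : (‖z‖₊ : ℝ≥0∞) < (spectralRadius ℂ a)⁻¹) :
    HasSum (fun k => z ^ k • a ^ k) (Ring.inverse (1 - z • a)) := by
  obtain ⟨r, hzr, hr⟩ := ENNReal.lt_iff_exists_nnreal_btwn.mp hz
  have hzr' : ‖z‖₊ < r := ENNReal.coe_lt_coe.mp hzr
  have H := (spectrum.hasFPowerSeriesOnBall_inverse_one_sub_smul ℂ a).exchange_radius
    ((spectrum.differentiableOn_inverse_one_sub_smul hr).hasFPowerSeriesOnBall (pos_of_gt hzr'))
  simpa [ContinuousMultilinearMap.mkPiRing_apply] using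
    H.hasSum (y := z) (by simpa [Metric.eball_coe] using NNReal.coe_lt_coe.mpr hzr')

theorem hasSum_resolvent_of_spectralRadius_lt {A : Type*} [NormedRing A]
    [NormedAlgebra ℂ A] [CompleteSpace A] (a : A) {t : ℂ}
    (ht : spectralRadius ℂ a < ‖t‖₊) :
    HasSum (fun k => t⁻¹ ^ (k + 1) • a ^ k) (resolvent a t) := by
  have ht0 : t ≠ 0 := by rintro rfl; simp at ht
  have hz : (‖t⁻¹‖₊ : ℝ≥0∞) < (spectralRadius ℂ a)⁻¹ := by
    rw [nnnorm_inv, ENNReal.coe_inv (by simpa using ht0)]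
    exact ENNReal.inv_lt_inv.mpr ht
  have key := spectrum.units_smul_resolvent_self (r := Units.mk0 t ht0) (a := a)
  simp only [Units.smul_def, Units.val_inv_eq_inv_val, Units.val_mk0, resolvent, map_one] at key
  have := (hasSum_pow_smul_pow_of_lt_inv_spectralRadius a hz).const_smul t⁻¹
  rw [← key, smul_smul, inv_mul_cancel₀ ht0, one_smul] at this
  simpa [smul_smul, pow_succ', resolvent] using this

theorem Matrix.map_nonsing_inv {n K L : Type*} [Fintype n] [DecidableEq n] [Field K] [Field L]
    (f : K →+* L) (M : Matrix n n K) : M⁻¹.map f = (M.map f)⁻¹ := by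
  ext i j
  have := congrFun (congrFun (RingHom.map_adjugate f M) i) j
  simp_all [inv_def, Ring.inverse_eq_inv', RingHom.map_det]

theorem Matrix.hasSum_resolvent_apply {n : Type*} [Fintype n] [DecidableEq n] [Nonempty n]
    (B : Matrix n n ℂ) {t : ℂ} (ht : ∀ z ∈ spectrum ℂ B, ‖z‖ < ‖t‖) (i j : n) :
    HasSum (fun k => t⁻¹ ^ (k + 1) * (B ^ k) i j) ((scalar n t - B)⁻¹ i j) := by
  let := Matrix.linftyOpNormedRing (n := n) (α := ℂ)
  let := Matrix.linftyOpNormedAlgebra (n := n) (α := ℂ) (R := ℂ)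
  have hρ : spectralRadius ℂ B < ‖t‖₊ := by
    refine spectrum.spectralRadius_lt_of_forall_lt _ fun w hw => ?_
    rw [← NNReal.coe_lt_coe, coe_nnnorm, coe_nnnorm]
    exact ht w hw
  have hsum := Pi.hasSum.1 (Pi.hasSum.1 (hasSum_resolvent_of_spectralRadius_lt B hρ) i) j
  rw [resolvent, ← nonsing_inv_eq_ringInverse, algebraMap_eq_diagonal] at hsum
  exact hsum

theorem Matrix.inv_scalar_sub_nonneg {n : Type*} [Fintype n] [DecidableEq n]
    {A : Matrix n n ℝ} (hA : ∀ i j, 0 ≤ A i j) {t : ℝ} (ht0 : 0 < t)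
    (ht : ∀ z ∈ spectrum ℂ (A.map Complex.ofReal), ‖z‖ < t) (i j : n) :
    0 ≤ (scalar n t - A)⁻¹ i j := by
  have : Nonempty n := ⟨i⟩
  have hsum := (A.map Complex.ofReal).hasSum_resolvent_apply (t := t)
    (by simpa [abs_of_pos ht0] using ht) i j
  have hreal : HasSum (fun k => t⁻¹ ^ (k + 1) * (A ^ k) i j) ((scalar n t - A)⁻¹ i j) := by
    have hpow (k : ℕ) : A.map Complex.ofReal ^ k = (A ^ k).map Complex.ofReal :=
      ((Complex.ofRealHom.mapMatrix (m := n)).map_pow A k).symm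
    have hsub : scalar n (t : ℂ) - A.map Complex.ofReal = (scalar n t - A).map Complex.ofReal := by
      ext k l
      simp [scalar_apply, diagonal_apply, apply_ite Complex.ofReal]
    have hinv : ((scalar n t - A).map Complex.ofReal)⁻¹ = (scalar n t - A)⁻¹.map Complex.ofReal :=
      ((scalar n t - A).map_nonsing_inv Complex.ofRealHom).symm
    rw [hsub, hinv] at hsum
    simp only [hpow, map_apply] at hsum
    exact_mod_cast hsum
  exact hreal.nonneg fun k => mul_nonneg (by positivity) (pow_apply_nonneg hA k i j)

theorem Polynomial.coeff_nonneg_of_eval_nonneg {f : ℝ[X]} {j : ℕ}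
    (hlow : ∀ m < j, f.coeff m = 0) (hpos : ∀ s > 0, 0 ≤ f.eval s) : 0 ≤ f.coeff j := by
  obtain ⟨g, rfl⟩ : X ^ j ∣ f := X_pow_dvd_iff.mpr hlow
  have hg : ∀ s > 0, 0 ≤ g.eval s := fun s hs =>
    nonneg_of_mul_nonneg_right (by simpa using hpos s hs) (pow_pos hs j)
  have hlim : Tendsto g.eval (𝓝[>] 0) (𝓝 (g.eval 0)) :=
    (g.continuous.tendsto 0).mono_left nhdsWithin_le_nhds
  have hcoeff : (X ^ j * g).coeff j = g.coeff 0 := by simpa using coeff_X_pow_mul g j 0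
  rw [hcoeff, coeff_zero_eq_eval_zero]
  exact ge_of_tendsto hlim (eventually_nhdsWithin_of_forall hg)

theorem Matrix.exists_nonneg_mul_eq_zero_of_charmatrix_mul {n : Type*} [Fintype n] [DecidableEq n]
    {B : Matrix n n ℝ} (hB : B.det = 0) {Q : Matrix n n ℝ[X]} {q : ℝ[X]}
    (hQ : charmatrix B * Q = q • 1) (hQ0 : Q ≠ 0) (hpos : ∀ s > 0, ∀ i j, 0 ≤ (Q i j).eval s) :
    ∃ M : Matrix n n ℝ, M ≠ 0 ∧ (∀ i j, 0 ≤ M i j) ∧ B * M = 0 := by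
  set P := matPolyEquiv Q
  set j := P.natTrailingDegree
  have hlow : ∀ m < j, P.coeff m = 0 := fun m hm => coeff_eq_zero_of_lt_natTrailingDegree hm
  have hP : (X - C B) * P = q.map (algebraMap ℝ _) := by
    rw [← matPolyEquiv_charmatrix, ← map_mul, hQ, matPolyEquiv_smul_one]
  have hcoeff : -(B * P.coeff j) = algebraMap ℝ _ (q.coeff j) := by
    have h := congrArg (coeff · j) hP
    simp only [sub_mul, coeff_sub, coeff_C_mul, coeff_map] at h
    rw [← h]
    rcases hj : j with _ | k
    · simp
    · rw [coeff_X_mul, hlow k (by omega), zero_sub]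
  have hqj : q.coeff j = 0 := by
    by_contra hq
    have hinv : B * (-(q.coeff j)⁻¹ • P.coeff j) = 1 := by
      rw [mul_smul_comm, neg_smul, ← smul_neg, hcoeff, Algebra.algebraMap_eq_smul_one, smul_smul,
        inv_mul_cancel₀ hq, one_smul]
    have h := congrArg det hinv
    rw [det_mul, hB, zero_mul, det_one] at h
    exact zero_ne_one h
  refine ⟨P.coeff j, ?_, fun i k => ?_, ?_⟩
  · exact trailingCoeff_nonzero_iff_nonzero.mpr ((map_ne_zero_iff _ matPolyEquiv.injective).mpr hQ0)
  · rw [matPolyEquiv_coeff_apply]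
    refine coeff_nonneg_of_eval_nonneg (fun m hm => ?_) (fun s hs => hpos s hs i k)
    rw [← matPolyEquiv_coeff_apply, hlow m hm, zero_apply]
  · simpa [hqj] using hcoeff

theorem Matrix.det_mul_adjugate_apply {n K : Type*} [Fintype n] [DecidableEq n] [Field K]
    (M : Matrix n n K) (i j : n) : M.det * M.adjugate i j = M.det ^ 2 * M⁻¹ i j := by
  by_cases h : M.det = 0
  · simp [h]
  · rw [inv_def, Ring.inverse_eq_inv', smul_apply, smul_eq_mul]
    field_simp

theorem Matrix.eval_charmatrix {n R : Type*} [Fintype n] [DecidableEq n] [CommRing R]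
    (M : Matrix n n R) (s : R) : (charmatrix M).map (eval s) = scalar n s - M := by
  rw [← matPolyEquiv_eval_eq_map, matPolyEquiv_charmatrix, eval_sub, eval_X, eval_C]

theorem Matrix.exists_nonneg_eigenvector_of_inv_nonneg {n : Type*} [Fintype n] [DecidableEq n]
    {A : Matrix n n ℝ} {a : ℝ} (ha : (scalar n a - A).det = 0)
    (hinv : ∀ t > a, ∀ i j, 0 ≤ (scalar n t - A)⁻¹ i j) :
    ∃ u : n → ℝ, u ≠ 0 ∧ 0 ≤ u ∧ A *ᵥ u = a • u := by
  set B := A - scalar n a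
  have hB : B.det = 0 := by
    rw [show B = -(scalar n a - A) from (neg_sub _ _).symm, det_neg, ha, mul_zero]
  have : Nonempty n := by
    by_contra h
    rw [not_nonempty_iff] at h
    simp at ha
  -- `Q` evaluates at `s` to `det (t - A) ^ 2 • (t - A)⁻¹` with `t = s + a`
  set Q := B.charpoly • adjugate (charmatrix B)
  have hQ : charmatrix B * Q = (B.charpoly * B.charpoly) • 1 := by
    rw [mul_smul_comm, mul_adjugate, smul_smul, charpoly]
  have hQ0 : Q ≠ 0 := by
    intro h0
    obtain ⟨i⟩ := ‹Nonempty n›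
    have := congrFun (congrFun hQ i) i
    simp [h0, B.charpoly_monic.ne_zero] at this
  have hpos : ∀ s > 0, ∀ i j, 0 ≤ (Q i j).eval s := by
    intro s hs i j
    have hadj := congrFun (congrFun (RingHom.map_adjugate (evalRingHom s) (charmatrix B)) i) j
    simp only [RingHom.mapMatrix_apply, coe_evalRingHom, map_apply] at hadj
    have hshift : scalar n s - B = scalar n (s + a) - A := by
      simp only [B, map_add]
      abel
    rw [show Q i j = B.charpoly * adjugate (charmatrix B) i j from rfl, eval_mul, hadj,
      eval_charmatrix, eval_charpoly, hshift, det_mul_adjugate_apply]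
    exact mul_nonneg (sq_nonneg _) (hinv _ (by linarith) i j)
  obtain ⟨M, hM0, hMnn, hBM⟩ := exists_nonneg_mul_eq_zero_of_charmatrix_mul hB hQ hQ0 hpos
  obtain ⟨k, hk⟩ : ∃ k, (fun i => M i k) ≠ 0 := by
    by_contra! h
    exact hM0 (ext fun i k => congrFun (h k) i)
  refine ⟨fun i => M i k, hk, fun i => hMnn i k, ?_⟩
  have hAM : A * M = a • M := by
    rw [← sub_eq_zero, ← smul_one_mul, ← sub_mul]
    simpa [B, smul_one_eq_diagonal, scalar_apply] using hBM
  ext i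
  simpa [mulVec, dotProduct, mul_apply] using congrFun (congrFun hAM i) k

theorem Matrix.exists_nonneg_eigenvector {n : Type*} [Fintype n] [DecidableEq n]
    {A : Matrix n n ℝ} (hA : ∀ i j, 0 ≤ A i j) {a : ℝ}
    (ha : (a : ℂ) ∈ spectrum ℂ (A.map Complex.ofReal))
    (hdom : ∀ z ∈ spectrum ℂ (A.map Complex.ofReal), ‖z‖ ≤ a) :
    ∃ u : n → ℝ, u ≠ 0 ∧ 0 ≤ u ∧ A *ᵥ u = a • u := by
  have ha0 : 0 ≤ a := by simpa using (norm_nonneg _).trans (hdom _ ha)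
  refine exists_nonneg_eigenvector_of_inv_nonneg ?_ fun t ht =>
    inv_scalar_sub_nonneg hA (by linarith) fun z hz => (hdom z hz).trans_lt ht
  rw [mem_spectrum_iff_isRoot_charpoly, IsRoot, show Complex.ofReal = ⇑Complex.ofRealHom from rfl,
    charpoly_map, eval_map, eval₂_at_apply, eval_charpoly] at ha
  exact Complex.ofReal_eq_zero.mp ha

theorem Matrix.det_one_add_vecMulVec {n K : Type*} [Fintype n] [DecidableEq n] [CommRing K]
    (u v : n → K) : (1 + vecMulVec u v).det = 1 + v ⬝ᵥ u := by
  rw [vecMulVec_eq Unit, det_one_add_replicateCol_mul_replicateRow]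

theorem Matrix.scalar_sub_mulVec_of_mulVec_eq_smul {n K : Type*} [Fintype n] [DecidableEq n]
    [CommRing K] {A : Matrix n n K} {u : n → K} {a : K} (hu : A *ᵥ u = a • u) (z : K) :
    (scalar n z - A) *ᵥ u = (z - a) • u := by
  rw [sub_mulVec, hu, scalar_apply, ← smul_one_eq_diagonal, smul_mulVec, one_mulVec, sub_smul]

theorem Matrix.invOf_mulVec_of_mulVec_eq_smul {n K : Type*} [Fintype n] [DecidableEq n] [Field K]
    {M : Matrix n n K} [Invertible M] {u : n → K} {c : K} (hc : c ≠ 0) (hu : M *ᵥ u = c • u) :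
    ⅟M *ᵥ u = c⁻¹ • u := by
  rw [eq_inv_smul_iff₀ hc, ← mulVec_smul, ← hu, mulVec_mulVec, invOf_mul_self, one_mulVec]

theorem Matrix.det_scalar_sub_fromBlocks_vecMulVec {p q K : Type*} [Fintype p] [DecidableEq p]
    [Fintype q] [DecidableEq q] [Field K] {A : Matrix p p K} {B : Matrix q q K}
    {u x : p → K} {v w : q → K} {a b z : K} (hu : A *ᵥ u = a • u) (hw : B *ᵥ w = b • w)
    (hA : IsUnit (scalar p z - A).det) (ha : z ≠ a) (hb : z ≠ b) :
    (scalar (p ⊕ q) z - fromBlocks A (vecMulVec u v) (vecMulVec w x) B).det =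
      (scalar p z - A).det * (scalar q z - B).det *
        (1 - (x ⬝ᵥ u) * (v ⬝ᵥ w) / ((z - a) * (z - b))) := by
  have : Invertible (scalar p z - A) := invertibleOfIsUnitDet _ hA
  have hblock : scalar (p ⊕ q) z - fromBlocks A (vecMulVec u v) (vecMulVec w x) B =
      fromBlocks (scalar p z - A) (-vecMulVec u v) (-vecMulVec w x) (scalar q z - B) := by
    ext (i | i) (j | j) <;> simp [scalar_apply, diagonal_apply]
  have hschur : -vecMulVec w x * ⅟(scalar p z - A) * -vecMulVec u v =
      ((x ⬝ᵥ u) / (z - a)) • vecMulVec w v := by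
    have hinvu := invOf_mulVec_of_mulVec_eq_smul (sub_ne_zero.mpr ha)
      (scalar_sub_mulVec_of_mulVec_eq_smul hu z)
    rw [Matrix.neg_mul, Matrix.mul_neg, Matrix.neg_mul, neg_neg, Matrix.mul_assoc, mul_vecMulVec,
      hinvu, vecMulVec_mul_vecMulVec, dotProduct_smul, smul_eq_mul, vecMulVec_smul, div_eq_inv_mul]
  have hrank1 : scalar q z - B - ((x ⬝ᵥ u) / (z - a)) • vecMulVec w v =
      (scalar q z - B) * (1 + vecMulVec (-((x ⬝ᵥ u) / (z - a) / (z - b)) • w) v) := by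
    rw [Matrix.mul_add, Matrix.mul_one, mul_vecMulVec, mulVec_smul,
      scalar_sub_mulVec_of_mulVec_eq_smul hw z, smul_smul, neg_mul,
      div_mul_cancel₀ _ (sub_ne_zero.mpr hb), smul_vecMulVec, neg_smul, sub_eq_add_neg]
  rw [hblock, det_fromBlocks₁₁, hschur, hrank1, det_mul, det_one_add_vecMulVec, dotProduct_smul,
    smul_eq_mul, div_div, div_eq_mul_inv, div_eq_mul_inv]
  ring

theorem Matrix.charpoly_fromBlocks_vecMulVec {p q K : Type*} [Fintype p] [DecidableEq p]
    [Fintype q] [DecidableEq q] [Field K] [Infinite K] {A : Matrix p p K} {B : Matrix q q K}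
    {u x : p → K} {v w : q → K} {a b : K} (hu : A *ᵥ u = a • u) (hw : B *ᵥ w = b • w)
    {f g : K[X]} (hA : A.charpoly = (X - C a) * f) (hB : B.charpoly = (X - C b) * g) :
    (fromBlocks A (vecMulVec u v) (vecMulVec w x) B).charpoly =
      f * g * ((X - C a) * (X - C b) - C ((x ⬝ᵥ u) * (v ⬝ᵥ w))) := by
  refine eq_of_infinite_eval_eq _ _ (Set.Infinite.mono (fun z hz => ?_)
    (finite_setOfPred_isRoot (A.charpoly_monic.mul B.charpoly_monic).ne_zero).infinite_compl)
  have hz : eval z A.charpoly ≠ 0 ∧ eval z B.charpoly ≠ 0 := by simpa using hz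
  rw [hA, hB, eval_mul, eval_mul, eval_sub, eval_sub, eval_X, eval_C, eval_C] at hz
  obtain ⟨hza, hfz⟩ := mul_ne_zero_iff.mp hz.1
  obtain ⟨hzb, -⟩ := mul_ne_zero_iff.mp hz.2
  have hAz : IsUnit (scalar p z - A).det := by
    rw [← eval_charpoly, hA, eval_mul, eval_sub, eval_X, eval_C]
    exact isUnit_iff_ne_zero.mpr (mul_ne_zero hza hfz)
  rw [Set.mem_ofPred_eq, eval_charpoly, det_scalar_sub_fromBlocks_vecMulVec hu hw hAz
    (sub_ne_zero.mp hza) (sub_ne_zero.mp hzb), ← eval_charpoly, ← eval_charpoly, hA, hB]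
  simp only [eval_mul, eval_sub, eval_X, eval_C]
  field_simp

theorem Matrix.exists_nonneg_charpoly_eq_of_eigenvectors {p q : Type*} [Fintype p]
    [DecidableEq p] [Fintype q] [DecidableEq q] {A : Matrix p p ℝ} {B : Matrix q q ℝ}
    (hA : ∀ i j, 0 ≤ A i j) (hB : ∀ i j, 0 ≤ B i j) {u : p → ℝ} {v : q → ℝ} {a b : ℝ}
    (hu0 : u ≠ 0) (hu : 0 ≤ u) (hAu : A *ᵥ u = a • u)
    (hv0 : v ≠ 0) (hv : 0 ≤ v) (hBv : B *ᵥ v = b • v)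
    {f g : ℝ[X]} (hAf : A.charpoly = (X - C a) * f) (hBg : B.charpoly = (X - C b) * g)
    {ε : ℝ} (hε : 0 ≤ ε) (hεab : b - a ≤ ε) :
    ∃ M : Matrix (p ⊕ q) (p ⊕ q) ℝ, (∀ i j, 0 ≤ M i j) ∧
      M.charpoly = (X - C (a + ε)) * f * ((X - C (b - ε)) * g) := by
  have huu : u ⬝ᵥ u ≠ 0 := dotProduct_self_eq_zero.not.mpr hu0
  have hvv : v ⬝ᵥ v ≠ 0 := dotProduct_self_eq_zero.not.mpr hv0
  set κ := ε * (ε + a - b) / ((u ⬝ᵥ u) * (v ⬝ᵥ v))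
  have hκ : 0 ≤ κ := by
    have := dotProduct_nonneg_of_nonneg hu hu
    have := dotProduct_nonneg_of_nonneg hv hv
    have : 0 ≤ ε + a - b := by linarith
    positivity
  have hcoupling : (u ⬝ᵥ u) * (v ⬝ᵥ κ • v) = ε * (ε + a - b) := by
    rw [dotProduct_smul, smul_eq_mul]
    simp only [κ]
    field_simp
  refine ⟨fromBlocks A (vecMulVec u v) (vecMulVec (κ • v) u) B, ?_, ?_⟩
  · rintro (i | i) (j | j) <;> simp only [fromBlocks_apply₁₁, fromBlocks_apply₁₂,
      fromBlocks_apply₂₁, fromBlocks_apply₂₂, vecMulVec_apply, Pi.smul_apply, smul_eq_mul]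
    exacts [hA i j, mul_nonneg (hu i) (hv j), mul_nonneg (mul_nonneg hκ (hv i)) (hu j), hB i j]
  · rw [charpoly_fromBlocks_vecMulVec hAu (by rw [mulVec_smul, hBv, smul_comm]) hAf hBg,
      hcoupling]
    simp only [C_add, C_sub, C_mul]
    ring

theorem Polynomial.exists_eq_X_sub_C_mul_of_map_eq {R S : Type*} [CommRing R] [CommRing S]
    {φ : R →+* S} (hφ : Function.Injective φ) {p : R[X]} {a : R} {P : S[X]}
    (h : p.map φ = (X - C (φ a)) * P) : ∃ f : R[X], p = (X - C a) * f ∧ f.map φ = P := by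
  have hf : (p /ₘ (X - C a)).map φ = P := by
    rw [map_divByMonic φ (monic_X_sub_C a), h, Polynomial.map_sub, map_X, map_C,
      mul_divByMonic_cancel_left _ (monic_X_sub_C _)]
  refine ⟨p /ₘ (X - C a), map_injective φ hφ ?_, hf⟩
  rw [Polynomial.map_mul, hf, h, Polynomial.map_sub, map_X, map_C]

theorem Polynomial.prod_X_sub_C_update {ι K : Type*} [Fintype ι] [DecidableEq ι] [CommRing K]
    (α : ι → K) (i₀ : ι) (c : K) :
    ∏ i, (X - C (Function.update α i₀ c i)) = (X - C c) * ∏ i ∈ univ.erase i₀, (X - C (α i)) := by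
  rw [← mul_prod_erase univ _ (mem_univ i₀), Function.update_self]
  congr 1
  exact prod_congr rfl fun i hi => by rw [Function.update_of_ne (ne_of_mem_erase hi)]

theorem Realizable.exists_perron_eigenvector {n : ℕ} {α : Fin n → ℂ} (hα : Realizable α)
    {i₀ : Fin n} {a : ℝ} (ha : α i₀ = a) (hdom : ∀ i, ‖α i‖ ≤ a) :
    ∃ A : Matrix (Fin n) (Fin n) ℝ, (∀ i j, 0 ≤ A i j) ∧
      (∃ f : ℝ[X], A.charpoly = (X - C a) * f ∧
        f.map Complex.ofRealHom = ∏ i ∈ univ.erase i₀, (X - C (α i))) ∧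
      ∃ u : Fin n → ℝ, u ≠ 0 ∧ 0 ≤ u ∧ A *ᵥ u = a • u := by
  obtain ⟨A, hA, hchar⟩ := hα
  have hspec (z : ℂ) : z ∈ spectrum ℂ (A.map Complex.ofReal) ↔ ∃ i, α i = z := by
    rw [mem_spectrum_iff_isRoot_charpoly, hchar, IsRoot, eval_prod, prod_eq_zero_iff]
    simp [sub_eq_zero, eq_comm]
  refine ⟨A, hA, exists_eq_X_sub_C_mul_of_map_eq Complex.ofRealHom.injective ?_,
    A.exists_nonneg_eigenvector hA ?_ ?_⟩
  · rw [← charpoly_map]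
    rwa [← mul_prod_erase univ _ (mem_univ i₀), ha] at hchar
  · exact (hspec a).mpr ⟨i₀, ha⟩
  · rintro z hz
    obtain ⟨i, rfl⟩ := (hspec z).mp hz
    exact hdom i

theorem realizable_append_of_fromBlocks {n m : ℕ} {α : Fin n → ℂ} {β : Fin m → ℂ}
    (M : Matrix (Fin n ⊕ Fin m) (Fin n ⊕ Fin m) ℝ) (hM : ∀ i j, 0 ≤ M i j)
    (hchar : M.charpoly.map Complex.ofRealHom = (∏ i, (X - C (α i))) * ∏ j, (X - C (β j))) :
    Realizable (Fin.append α β) := by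
  refine ⟨reindex finSumFinEquiv finSumFinEquiv M, fun i j => hM _ _, ?_⟩
  rw [show Complex.ofReal = ⇑Complex.ofRealHom from rfl, charpoly_map, charpoly_reindex,
    hchar, Fin.prod_univ_add]
  simp

/-- If `(α_1, …, α_n)` and `(β_1, …, β_m)` are realizable (with Perron eigenvalues
`α_1`, `β_1`), then for any `ε ≥ max (β_1 - α_1) 0` the list
`(α_1 + ε, β_1 - ε, α_2, …, α_n, β_2, …, β_m)` is realizable. -/
theorem realizable_join (n m : ℕ) (hn : 0 < n) (hm : 0 < m)
    (α : Fin n → ℂ) (β : Fin m → ℂ)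
    (hα1 : (α ⟨0, hn⟩).im = 0) (hβ1 : (β ⟨0, hm⟩).im = 0)
    (hαp : ∀ i, ‖α i‖ ≤ (α ⟨0, hn⟩).re)
    (hβp : ∀ j, ‖β j‖ ≤ (β ⟨0, hm⟩).re)
    (hA : Realizable α) (hB : Realizable β)
    (ε : ℝ) (hε : max ((β ⟨0, hm⟩).re - (α ⟨0, hn⟩).re) 0 ≤ ε) :
    Realizable (Fin.append (Function.update α ⟨0, hn⟩ (α ⟨0, hn⟩ + (ε : ℂ)))
      (Function.update β ⟨0, hm⟩ (β ⟨0, hm⟩ - (ε : ℂ)))) := by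
  set a := (α ⟨0, hn⟩).re
  set b := (β ⟨0, hm⟩).re
  have hα0 : α ⟨0, hn⟩ = a := Complex.ext rfl hα1
  have hβ0 : β ⟨0, hm⟩ = b := Complex.ext rfl hβ1
  obtain ⟨A, hA, ⟨f, hAf, hf⟩, u, hu0, hu, hAu⟩ := hA.exists_perron_eigenvector hα0 hαp
  obtain ⟨B, hB, ⟨g, hBg, hg⟩, v, hv0, hv, hBv⟩ := hB.exists_perron_eigenvector hβ0 hβp
  obtain ⟨M, hM, hMchar⟩ := exists_nonneg_charpoly_eq_of_eigenvectors hA hB hu0 hu hAu hv0 hv hBv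
    hAf hBg (le_of_max_le_right hε) (le_of_max_le_left hε)
  refine realizable_append_of_fromBlocks M hM ?_
  rw [hMchar, prod_X_sub_C_update, prod_X_sub_C_update, hα0, hβ0, ← hf, ← hg]
  simp only [Polynomial.map_mul, Polynomial.map_sub, map_X, map_C, Complex.ofRealHom_eq_coe,
    Complex.ofReal_add, Complex.ofReal_sub]
end

section
/- (Improved Guo bound) Let n ≥ 2 and let Λ' = (λ_2, …, λ_n) be a list of complex numbers that is closed under complex conjugation (the multiset {λ_2, …, λ_n} equals the multiset of its conjugates). Set m = max_{2 ≤ j ≤ n} |λ_j|. Then the list ((n−1)·m, λ_2, …, λ_n) is realizable; consequently, the Guo index λ_0 of Λ' (the minimal λ such that (λ, λ_2, …, λ_n) is realizable) satisfies λ_0 ≤ (n−1)·max_{2 ≤ j ≤ n} |λ_j|. -/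
/-!
Take a real matrix `B` with spectrum `Λ'` and Euclidean operator norm at most `m`: the block
diagonal matrix with a block `(λ)` for each real `λ` and a block `[[a, -b], [b, a]]` for each
conjugate pair `a ± bi`. Let `H` be a symmetric orthogonal matrix (a Householder reflection) whose
first column is the constant vector `1/√n`, and put `A = H (r ⊕ B) H`. Then
`A i j = r/n + u_iᵀ B u_j`, where `u_i` is the rest of the `i`-th row of `H` and
`|u_i|² = (n-1)/n`; by Cauchy–Schwarz `A i j ≥ r/n - m (n-1)/n`, which is `0` for
`r = (n-1) m`. The bound on the infimum needs the set of realizable `λ` to be bounded below: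
a nonnegative matrix has nonnegative trace, so every realizable `λ` is at least `-∑ Re λ_j`.
-/

open Polynomial Matrix Finset

section DotProduct

variable {ι κ : Type*} [Fintype ι] [Fintype κ]

lemma dotProduct_self_nonneg (v : ι → ℝ) : 0 ≤ v ⬝ᵥ v :=
  Finset.sum_nonneg fun i _ => mul_self_nonneg (v i)

lemma sq_dotProduct_le (x y : ι → ℝ) : (x ⬝ᵥ y) ^ 2 ≤ (x ⬝ᵥ x) * (y ⬝ᵥ y) := by
  simpa only [dotProduct, sq] using Finset.sum_mul_sq_le_sq_mul_sq univ x y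

lemma dotProduct_sum_type {R : Type*} [Mul R] [AddCommMonoid R] (x y : ι ⊕ κ → R) :
    x ⬝ᵥ y = (x ∘ Sum.inl) ⬝ᵥ (y ∘ Sum.inl) + (x ∘ Sum.inr) ⬝ᵥ (y ∘ Sum.inr) :=
  Fintype.sum_sum_type _

lemma fromBlocks_zero_mulVec {R : Type*} [NonUnitalNonAssocSemiring R]
    (A : Matrix ι ι R) (D : Matrix κ κ R) (y : ι ⊕ κ → R) :
    fromBlocks A 0 0 D *ᵥ y = Sum.elim (A *ᵥ (y ∘ Sum.inl)) (D *ᵥ (y ∘ Sum.inr)) := by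
  rw [← Sum.elim_comp_inl_inr y, fromBlocks_mulVec]
  simp

lemma dotProduct_fromBlocks_zero_mulVec {R : Type*} [NonUnitalNonAssocSemiring R]
    (A : Matrix ι ι R) (D : Matrix κ κ R) (x y : ι ⊕ κ → R) :
    x ⬝ᵥ fromBlocks A 0 0 D *ᵥ y =
      (x ∘ Sum.inl) ⬝ᵥ A *ᵥ (y ∘ Sum.inl) +
        (x ∘ Sum.inr) ⬝ᵥ D *ᵥ (y ∘ Sum.inr) := by
  rw [fromBlocks_zero_mulVec, dotProduct_sum_type]
  rfl

end DotProduct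

def OpNormLE {ι : Type*} [Fintype ι] (m : ℝ) (B : Matrix ι ι ℝ) : Prop :=
  ∀ y, B *ᵥ y ⬝ᵥ B *ᵥ y ≤ m ^ 2 * (y ⬝ᵥ y)

namespace OpNormLE

variable {ι κ : Type*} [Fintype ι] [Fintype κ] {m : ℝ}

lemma of_transpose_mul_self_eq [DecidableEq ι] {B : Matrix ι ι ℝ} {c : ℝ}
    (hB : Bᵀ * B = c • 1) (hc : c ≤ m ^ 2) : OpNormLE m B := by
  intro y
  have : B *ᵥ y ⬝ᵥ B *ᵥ y = c * (y ⬝ᵥ y) := by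
    rw [dotProduct_mulVec, ← mulVec_transpose, mulVec_mulVec, hB, smul_mulVec, one_mulVec,
      smul_dotProduct, smul_eq_mul]
  rw [this]
  exact mul_le_mul_of_nonneg_right hc (dotProduct_self_nonneg y)

lemma fromBlocks {A : Matrix ι ι ℝ} {D : Matrix κ κ ℝ} (hA : OpNormLE m A)
    (hD : OpNormLE m D) : OpNormLE m (fromBlocks A 0 0 D) := by
  intro y
  rw [fromBlocks_zero_mulVec, sumElim_dotProduct_sumElim, dotProduct_sum_type y y, mul_add]
  exact add_le_add (hA _) (hD _)

lemma sq_dotProduct_mulVec_le {B : Matrix ι ι ℝ} (hB : OpNormLE m B) (x y : ι → ℝ) :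
    (x ⬝ᵥ B *ᵥ y) ^ 2 ≤ m ^ 2 * (x ⬝ᵥ x) * (y ⬝ᵥ y) := calc
  (x ⬝ᵥ B *ᵥ y) ^ 2 ≤ (x ⬝ᵥ x) * (B *ᵥ y ⬝ᵥ B *ᵥ y) := sq_dotProduct_le _ _
  _ ≤ (x ⬝ᵥ x) * (m ^ 2 * (y ⬝ᵥ y)) :=
    mul_le_mul_of_nonneg_left (hB y) (dotProduct_self_nonneg x)
  _ = m ^ 2 * (x ⬝ᵥ x) * (y ⬝ᵥ y) := by ring

end OpNormLE

def IsRealSpectrumNormLE (m : ℝ) (s : Multiset ℂ) : Prop :=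
  ∃ (ι : Type) (_ : Fintype ι) (_ : DecidableEq ι) (B : Matrix ι ι ℝ),
    B.charpoly.map Complex.ofRealHom = (s.map fun z => X - C z).prod ∧ OpNormLE m B

namespace IsRealSpectrumNormLE

variable {m : ℝ}

lemma zero : IsRealSpectrumNormLE m 0 :=
  ⟨Empty, inferInstance, inferInstance, 0, by simp [charpoly_isEmpty], fun y => by simp⟩

lemma add {s t : Multiset ℂ} (hs : IsRealSpectrumNormLE m s) (ht : IsRealSpectrumNormLE m t) :
    IsRealSpectrumNormLE m (s + t) := by
  obtain ⟨ι, _, _, A, hAs, hA⟩ := hs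
  obtain ⟨κ, _, _, D, hDt, hD⟩ := ht
  refine ⟨ι ⊕ κ, inferInstance, inferInstance, fromBlocks A 0 0 D, ?_, hA.fromBlocks hD⟩
  rw [charpoly_fromBlocks_zero₁₂, Polynomial.map_mul, hAs, hDt, Multiset.map_add,
    Multiset.prod_add]

lemma singleton_ofReal {x : ℝ} (hx : |x| ≤ m) : IsRealSpectrumNormLE m {(x : ℂ)} := by
  refine ⟨Unit, inferInstance, inferInstance, diagonal fun _ => x, by simp [charpoly_diagonal],
    OpNormLE.of_transpose_mul_self_eq (c := x ^ 2) ?_ ?_⟩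
  · ext
    simp [sq]
  · simpa [sq_abs] using sq_le_sq' (abs_le.1 hx).1 (abs_le.1 hx).2

lemma pair_conj {z : ℂ} (hz : ‖z‖ ≤ m) : IsRealSpectrumNormLE m {z, starRingEnd ℂ z} := by
  refine ⟨Fin 2, inferInstance, inferInstance, !![z.re, -z.im; z.im, z.re], ?_,
    OpNormLE.of_transpose_mul_self_eq (c := Complex.normSq z) ?_ ?_⟩
  · have hfactor : (X - C z) * (X - C (starRingEnd ℂ z))
        = X ^ 2 - C (z + starRingEnd ℂ z) * X + C (z * starRingEnd ℂ z) := by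
      simp only [map_add, map_mul]; ring
    rw [charpoly_fin_two, trace_fin_two, det_fin_two]
    simp [hfactor, Complex.add_conj, Complex.mul_conj, Complex.normSq_apply, two_mul]
  · ext i j
    fin_cases i <;> fin_cases j <;>
      simp [Matrix.mul_apply, Fin.sum_univ_two, Complex.normSq_apply] <;> ring
  · rw [← Complex.sq_norm]
    exact pow_le_pow_left₀ (norm_nonneg z) hz 2

end IsRealSpectrumNormLE

theorem isRealSpectrumNormLE_of_map_conj_eq {m : ℝ} {s : Multiset ℂ}
    (hs : s.map (starRingEnd ℂ) = s) (hm : ∀ z ∈ s, ‖z‖ ≤ m) : IsRealSpectrumNormLE m s := by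
  induction s using Multiset.strongInductionOn with
  | ih s ih =>
  rcases s.empty_or_exists_mem with rfl | ⟨z, hz⟩
  · exact .zero
  have hconj_erase : ∀ w, (s.erase w).map (starRingEnd ℂ) = s.erase (starRingEnd ℂ w) :=
    fun w => by rw [Multiset.map_erase _ (starRingEnd ℂ).injective, hs]
  by_cases hreal : starRingEnd ℂ z = z
  · have hz' : (z.re : ℂ) = z := Complex.conj_eq_iff_re.1 hreal
    rw [← Multiset.cons_erase hz, ← Multiset.singleton_add]
    refine .add (hz' ▸ .singleton_ofReal ?_) (ih _ (Multiset.erase_lt.2 hz) ?_ ?_)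
    · exact (Complex.abs_re_le_norm z).trans (hm z hz)
    · rw [hconj_erase, hreal]
    · exact fun w hw => hm w (Multiset.mem_of_mem_erase hw)
  · have hz_conj : starRingEnd ℂ z ∈ s.erase z :=
      (Multiset.mem_erase_of_ne hreal).2 (hs ▸ Multiset.mem_map_of_mem _ hz)
    set t := (s.erase z).erase (starRingEnd ℂ z)
    have hst : s = {z, starRingEnd ℂ z} + t := by
      rw [Multiset.insert_eq_cons, Multiset.cons_add, Multiset.singleton_add,
        Multiset.cons_erase hz_conj, Multiset.cons_erase hz]
    rw [hst]
    refine .add (.pair_conj (hm z hz))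
      (ih t ((Multiset.erase_lt.2 hz_conj).trans (Multiset.erase_lt.2 hz)) ?_ ?_)
    · rw [Multiset.map_erase _ (starRingEnd ℂ).injective, hconj_erase, Complex.conj_conj,
        Multiset.erase_comm]
    · exact fun w hw => hm w (Multiset.mem_of_mem_erase (Multiset.mem_of_mem_erase hw))

section Householder

variable {K ι : Type*} [Field K] [Fintype ι] [DecidableEq ι]

def householder (w : ι → K) : Matrix ι ι K := 1 - (2 / (w ⬝ᵥ w)) • vecMulVec w w

lemma householder_transpose (w : ι → K) : (householder w)ᵀ = householder w := by
  simp [householder, transpose_vecMulVec]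

lemma householder_mul_self {w : ι → K} (hw : w ⬝ᵥ w ≠ 0) :
    householder w * householder w = 1 := by
  have hsq : vecMulVec w w * vecMulVec w w = (w ⬝ᵥ w) • vecMulVec w w := by
    rw [vecMulVec_mul_vecMulVec, vecMulVec_smul]
  simp only [householder, sub_mul, mul_sub, one_mul, mul_one, Matrix.smul_mul, Matrix.mul_smul,
    hsq, smul_smul, div_mul_cancel₀ 2 hw]
  module

lemma householder_sub_mulVec {u v : ι → K} (huv : (u - v) ⬝ᵥ (u - v) ≠ 0)
    (h : u ⬝ᵥ u = v ⬝ᵥ v) : householder (u - v) *ᵥ u = v := by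
  have hw : (u - v) ⬝ᵥ (u - v) = 2 * ((u - v) ⬝ᵥ u) := by
    simp only [sub_dotProduct, dotProduct_sub, dotProduct_comm v u, h]; ring
  have hcoeff : 2 / ((u - v) ⬝ᵥ (u - v)) * ((u - v) ⬝ᵥ u) = 1 := by
    rw [hw] at huv ⊢
    rw [div_mul_eq_mul_div, div_self huv]
  rw [householder, sub_mulVec, one_mulVec, smul_mulVec, vecMulVec_mulVec, op_smul_eq_smul,
    smul_smul, hcoeff, one_smul, sub_sub_cancel]

end Householder

lemma row_dotProduct_self_of_mul_transpose {R ι : Type*} [CommSemiring R] [Fintype ι]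
    [DecidableEq ι] {H : Matrix ι ι R} (hH : H * Hᵀ = 1) (i : ι) : H i ⬝ᵥ H i = 1 := by
  simpa [mul_apply'] using congrFun (congrFun hH i) i

lemma exists_symm_involution_mulVec_eq {K ι : Type*} [Field K] [LinearOrder K]
    [IsStrictOrderedRing K] [Fintype ι] [DecidableEq ι] {u v : ι → K} (h : u ⬝ᵥ u = v ⬝ᵥ v) :
    ∃ H : Matrix ι ι K, Hᵀ = H ∧ H * H = 1 ∧ H *ᵥ u = v := by
  by_cases huv : u = v
  · exact ⟨1, transpose_one, mul_one 1, huv ▸ one_mulVec u⟩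
  have hw : (u - v) ⬝ᵥ (u - v) ≠ 0 := by
    rwa [Ne, dotProduct_self_eq_zero, sub_eq_zero]
  exact ⟨householder (u - v), householder_transpose _, householder_mul_self hw,
    householder_sub_mulVec hw h⟩

lemma exists_symm_involution_col_eq_inv_sqrt (κ : Type*) [Fintype κ] [DecidableEq κ] :
    ∃ H : Matrix (Unit ⊕ κ) (Unit ⊕ κ) ℝ, Hᵀ = H ∧ H * H = 1 ∧
      ∀ i, H i (Sum.inl ()) = (√(Fintype.card κ + 1))⁻¹ := by
  set n : ℝ := Fintype.card κ + 1
  have hn : 0 < n := by positivity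
  set v : Unit ⊕ κ → ℝ := fun _ => (√n)⁻¹
  set e : Unit ⊕ κ → ℝ := Pi.single (Sum.inl ()) 1
  have hv : e ⬝ᵥ e = v ⬝ᵥ v := by
    simp only [e, v, dotProduct, ← mul_inv, Real.mul_self_sqrt hn.le, Finset.sum_const,
      Finset.card_univ, Fintype.card_sum, Fintype.card_unit]
    simpa [n, add_comm] using (mul_inv_cancel₀ hn.ne').symm
  obtain ⟨H, hHt, hHH, hHe⟩ := exists_symm_involution_mulVec_eq hv
  exact ⟨H, hHt, hHH, fun i => by simpa [e, v, mulVec_single_one] using congrFun hHe i⟩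

theorem exists_nonneg_charpoly_eq_X_sub_C_mul {κ : Type*} [Fintype κ] [DecidableEq κ]
    {m r : ℝ} (hm : 0 ≤ m) {B : Matrix κ κ ℝ} (hB : OpNormLE m B)
    (hr : Fintype.card κ * m ≤ r) :
    ∃ A : Matrix (Unit ⊕ κ) (Unit ⊕ κ) ℝ, (∀ i j, 0 ≤ A i j) ∧
      A.charpoly = (X - C r) * B.charpoly := by
  obtain ⟨H, hHt, hHH, hcol⟩ := exists_symm_involution_col_eq_inv_sqrt κ
  set n : ℝ := Fintype.card κ + 1
  have hn : 0 < n := by positivity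
  have hsqrt : (√n)⁻¹ * (√n)⁻¹ = n⁻¹ := by rw [← mul_inv, Real.mul_self_sqrt hn.le]
  have hrow : ∀ i, (H i ∘ Sum.inr) ⬝ᵥ (H i ∘ Sum.inr) = Fintype.card κ * n⁻¹ := fun i => by
    have hunit := row_dotProduct_self_of_mul_transpose (by rw [hHt, hHH]) i
    rw [dotProduct_sum_type] at hunit
    simp only [dotProduct, Function.comp_apply, hcol, hsqrt, Finset.univ_unique,
      Finset.sum_singleton] at hunit
    have hcard : (Fintype.card κ : ℝ) * n⁻¹ = 1 - n⁻¹ := by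
      rw [show (Fintype.card κ : ℝ) = n - 1 by simp [n], sub_mul, mul_inv_cancel₀ hn.ne',
        one_mul]
    simp only [dotProduct, Function.comp_apply, hcard]
    linarith
  set F := fromBlocks (diagonal fun _ : Unit => r) 0 0 B
  refine ⟨H * F * H, fun i j => ?_, ?_⟩
  · rw [mul_mul_apply, hHt, dotProduct_fromBlocks_zero_mulVec]
    have hfirst :
        (H i ∘ Sum.inl) ⬝ᵥ (diagonal fun _ => r) *ᵥ (H j ∘ Sum.inl) = r * n⁻¹ := by
      simp [dotProduct, mulVec_diagonal, hcol, ← hsqrt]; ring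
    have hbound := hB.sq_dotProduct_mulVec_le (H i ∘ Sum.inr) (H j ∘ Sum.inr)
    rw [hrow, hrow] at hbound
    have hlower := (abs_le_of_sq_le_sq' (b := m * (Fintype.card κ * n⁻¹))
      (hbound.trans_eq (by ring)) (by positivity)).1
    have hmr : m * (Fintype.card κ * n⁻¹) ≤ r * n⁻¹ := by
      rw [← mul_assoc, mul_comm m]
      exact mul_le_mul_of_nonneg_right hr (by positivity)
    rw [hfirst]
    linarith
  · rw [charpoly_mul_comm, ← Matrix.mul_assoc, hHH, Matrix.one_mul, charpoly_fromBlocks_zero₁₂,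
      charpoly_diagonal]
    simp

lemma card_eq_of_charpoly_map_eq_prod {ι : Type*} [Fintype ι] [DecidableEq ι] {A : Matrix ι ι ℝ}
    {s : Multiset ℂ} (h : A.charpoly.map Complex.ofRealHom = (s.map fun z => X - C z).prod) :
    Fintype.card ι = Multiset.card s := by
  rw [← A.charpoly_natDegree_eq_dim, ← natDegree_multiset_prod_X_sub_C_eq_card, ← h,
    natDegree_map]

lemma realizable_of_charpoly_map_eq {ι : Type*} [Fintype ι] [DecidableEq ι] {n : ℕ}
    {l : Fin n → ℂ} {A : Matrix ι ι ℝ} (hA : ∀ i j, 0 ≤ A i j)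
    (h : A.charpoly.map Complex.ofRealHom = ∏ i, (X - C (l i))) : Realizable l := by
  have hcard : Fintype.card ι = n := by
    simpa using card_eq_of_charpoly_map_eq_prod (s := univ.val.map l) (by rwa [Multiset.map_map])
  let e := Fintype.equivFinOfCardEq hcard
  refine ⟨reindex e e A, fun i j => hA _ _, ?_⟩
  rw [← h, ← charpoly_reindex e, ← charpoly_map]
  rfl

lemma Realizable.re_sum_nonneg {n : ℕ} {l : Fin n → ℂ} (h : Realizable l) :
    0 ≤ (∑ i, l i).re := by
  obtain ⟨A, hA, hchar⟩ := h
  have htrace : ∑ i, l i = (A.map Complex.ofReal).trace := by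
    rw [trace_eq_neg_charpoly_nextCoeff, hchar, prod_X_sub_C_nextCoeff, neg_neg]
  rw [htrace, trace, Complex.re_sum]
  exact Finset.sum_nonneg fun i _ => by simpa using hA i i

/-- **Improved Guo bound.** Let `Λ' = (λ_2, …, λ_n)` (here a self-conjugate list of
`k = n - 1 ≥ 1` complex numbers) and `m = max_j |λ_j|`. Then `((n-1)·m, λ_2, …, λ_n)`
is realizable, and consequently the Guo index of `Λ'` (the infimum of the `λ` making
`(λ, λ_2, …, λ_n)` realizable) is at most `(n-1)·m`. -/
theorem guo_bound_improved (k : ℕ) (hk : 0 < k) (l' : Fin k → ℂ)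
    (hconj : Multiset.map (starRingEnd ℂ) (Finset.univ.val.map l') = Finset.univ.val.map l')
    (m : ℝ)
    (hm : m = Finset.univ.sup' ⟨⟨0, hk⟩, Finset.mem_univ _⟩ (fun i => ‖l' i‖)) :
    Realizable (Fin.cons (((k : ℝ) * m : ℝ) : ℂ) l') ∧
    sInf {x : ℝ | Realizable (Fin.cons ((x : ℂ)) l')} ≤ (k : ℝ) * m := by
  have hle : ∀ i, ‖l' i‖ ≤ m := fun i => hm ▸ le_sup' (fun i => ‖l' i‖) (mem_univ i)
  have hm0 : 0 ≤ m := (norm_nonneg _).trans (hle ⟨0, hk⟩)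
  obtain ⟨κ, _, _, B, hBchar, hB⟩ :=
    isRealSpectrumNormLE_of_map_conj_eq hconj (by simpa using hle)
  have hκ : Fintype.card κ = k := by simpa using card_eq_of_charpoly_map_eq_prod hBchar
  obtain ⟨A, hA, hAchar⟩ :=
    exists_nonneg_charpoly_eq_X_sub_C_mul hm0 hB (r := k * m) (by rw [hκ])
  have hreal : Realizable (Fin.cons (((k : ℝ) * m : ℝ) : ℂ) l') := by
    refine realizable_of_charpoly_map_eq hA ?_
    rw [hAchar, Polynomial.map_mul, hBchar, Fin.prod_univ_succ, Multiset.map_map]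
    simp only [Fin.cons_zero, Fin.cons_succ, Polynomial.map_sub, map_X, map_C]
    rfl
  refine ⟨hreal, csInf_le ⟨-∑ i, (l' i).re, fun x hx => ?_⟩ hreal⟩
  have := hx.re_sum_nonneg
  simp only [Fin.sum_univ_succ, Fin.cons_zero, Fin.cons_succ, Complex.add_re, Complex.ofReal_re,
    Complex.re_sum] at this
  linarith
end

section
/- (Suleimanova's theorem) Let Λ = (λ_1, λ_2, …, λ_n) be a list of real numbers satisfying λ_1 + λ_2 + … + λ_n ≥ 0 and λ_k < 0 for k = 2, 3, …, n. Then Λ is realizable. -/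
open Polynomial Matrix Finset

/-- A list of real numbers is realizable if it is the spectrum (counted with
algebraic multiplicity) of an entrywise nonnegative real matrix. -/
def RealRealizable {n : ℕ} (l : Fin n → ℝ) : Prop :=
  ∃ A : Matrix (Fin n) (Fin n) ℝ, (∀ i j, 0 ≤ A i j) ∧
    A.charpoly = ∏ i, (X - C (l i))

/-!
Write the characteristic polynomial as `p = (X - λ₁) ∏_{k ≥ 2} (X + μₖ)` with `μₖ = -λₖ > 0`, so
that `λ₁ ≥ ∑ μₖ`. If `eⱼ` are the elementary symmetric functions of the `μₖ`, the coefficient of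
`X ^ (n - 1 - j)` in `p` is `eⱼ₊₁ - λ₁ eⱼ ≤ eⱼ₊₁ - e₁ eⱼ ≤ 0`. So every non-leading coefficient of
`p` is nonpositive, and the companion matrix of `p` (ones on the subdiagonal, the negated
coefficients in the last column) is a nonnegative matrix with characteristic polynomial `p`.
-/

namespace Polynomial

section Ring

variable {R : Type*} [Ring R]

/-- The matrix of multiplication by `X` on `R[X] ⧸ (p)` in the basis `1, X, …, X ^ (n - 1)`,
when `p` is monic of degree `n`. -/
def companion (n : ℕ) (p : R[X]) : Matrix (Fin n) (Fin n) R :=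
  Matrix.of fun i j => if (j : ℕ) + 1 = n then -p.coeff i else if (i : ℕ) = j + 1 then 1 else 0

lemma companion_nonneg [PartialOrder R] [IsOrderedRing R] {n : ℕ} {p : R[X]}
    (hp : ∀ k < n, p.coeff k ≤ 0) (i j : Fin n) : 0 ≤ companion n p i j := by
  rw [companion, of_apply]
  split_ifs
  · exact neg_nonneg.2 (hp i i.isLt)
  · exact zero_le_one
  · exact le_rfl

end Ring

section CommRing

variable {R : Type*} [CommRing R] [Nontrivial R] {p : R[X]}

lemma X_pow_natDegree_modByMonic (hp : p.Monic) :
    X ^ p.natDegree %ₘ p = -p.eraseLead := by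
  have hX : X ^ p.natDegree %ₘ p = -p.eraseLead %ₘ p := by
    refine modByMonic_eq_of_dvd_sub hp ⟨1, ?_⟩
    have h := p.eraseLead_add_C_mul_X_pow
    rw [hp.leadingCoeff, C_1, one_mul] at h
    rw [sub_neg_eq_add, add_comm, h, mul_one]
  rw [hX, modByMonic_eq_self_iff hp, degree_neg]
  exact degree_eraseLead_lt hp.ne_zero

lemma leftMulMatrix_root_eq_companion (hp : p.Monic) :
    Algebra.leftMulMatrix (AdjoinRoot.powerBasisAux' hp) (AdjoinRoot.root p) =
      companion p.natDegree p := by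
  ext i j
  have hbasis : AdjoinRoot.powerBasisAux' hp j = AdjoinRoot.root p ^ (j : ℕ) :=
    (AdjoinRoot.powerBasis' hp).basis_eq_pow j
  rw [Algebra.leftMulMatrix_eq_repr_mul, hbasis, ← pow_succ', ← AdjoinRoot.mk_X, ← map_pow,
    AdjoinRoot.powerBasisAux'_repr_apply_to_fun, AdjoinRoot.modByMonicHom_mk, companion, of_apply]
  split_ifs with hj hi
  · rw [hj, X_pow_natDegree_modByMonic hp, coeff_neg, eraseLead_coeff_of_ne _ i.isLt.ne]
  all_goals
    rw [(modByMonic_eq_self_iff hp).2 (degree_lt_degree (by rw [natDegree_X_pow]; omega)),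
      coeff_X_pow]
    simp [hi]

end CommRing

theorem charpoly_companion {K : Type*} [Field K] {p : K[X]} (hp : p.Monic) {n : ℕ}
    (hn : p.natDegree = n) :
    (companion n p).charpoly = p := by
  subst hn
  have h := charpoly_leftMulMatrix (AdjoinRoot.powerBasis' hp)
  change (Algebra.leftMulMatrix (AdjoinRoot.powerBasisAux' hp) (AdjoinRoot.root p)).charpoly =
    minpoly K (AdjoinRoot.root p) at h
  rw [leftMulMatrix_root_eq_companion hp,
    AdjoinRoot.minpoly_root hp.ne_zero, hp.leadingCoeff, inv_one, C_1, mul_one] at h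
  exact h

lemma coeff_X_add_C_mul_succ {R : Type*} [Semiring R] (a : R) (q : R[X]) (k : ℕ) :
    ((X + C a) * q).coeff (k + 1) = q.coeff k + a * q.coeff (k + 1) := by
  rw [add_mul, coeff_add, coeff_X_mul, coeff_C_mul]

section Order

section Semiring

variable {R : Type*} [Semiring R] [PartialOrder R] [IsOrderedRing R]

lemma coeff_mul_nonneg {p q : R[X]} (hp : ∀ k, 0 ≤ p.coeff k) (hq : ∀ k, 0 ≤ q.coeff k) (k : ℕ) :
    0 ≤ (p * q).coeff k := by
  rw [coeff_mul]
  exact sum_nonneg fun x _ => mul_nonneg (hp _) (hq _)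

end Semiring

variable {R : Type*} [CommRing R] [LinearOrder R] [IsStrictOrderedRing R] {ι : Type*}

lemma coeff_prod_X_add_C_nonneg {s : Finset ι} {μ : ι → R} (hμ : ∀ i ∈ s, 0 ≤ μ i) (k : ℕ) :
    0 ≤ (∏ i ∈ s, (X + C (μ i))).coeff k := by
  refine prod_induction _ (fun p : R[X] => ∀ k, 0 ≤ p.coeff k) (fun p q => coeff_mul_nonneg)
    (fun k => ?_) (fun i hi k => ?_) k
  · rw [coeff_one]; split_ifs <;> simp
  · rw [coeff_add, coeff_X, coeff_C]
    split_ifs <;> linarith [hμ i hi]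

lemma coeff_prod_X_add_C_le_sum_mul {s : Finset ι} {μ : ι → R} (hμ : ∀ i ∈ s, 0 ≤ μ i) :
    ∀ k < #s, (∏ i ∈ s, (X + C (μ i))).coeff k ≤
      (∑ i ∈ s, μ i) * (∏ i ∈ s, (X + C (μ i))).coeff (k + 1) := by
  induction s using Finset.cons_induction with
  | empty => simp
  | cons a s ha ih =>
    rw [forall_mem_cons] at hμ
    obtain ⟨hμa, hμs⟩ := hμ
    have hq := coeff_prod_X_add_C_nonneg hμs
    have hS : 0 ≤ ∑ i ∈ s, μ i := sum_nonneg hμs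
    intro k hk
    rw [prod_cons, sum_cons, coeff_X_add_C_mul_succ]
    cases k with
    | zero =>
      rw [mul_coeff_zero, coeff_add, coeff_X_zero, coeff_C_zero, zero_add, zero_add]
      nlinarith [mul_nonneg hS (hq 0), mul_nonneg (add_nonneg hμa hS) (mul_nonneg hμa (hq 1))]
    | succ k =>
      rw [coeff_X_add_C_mul_succ]
      have := ih hμs k (by rw [card_cons] at hk; omega)
      nlinarith [mul_nonneg (add_nonneg hμa hS) (mul_nonneg hμa (hq (k + 2)))]

lemma coeff_X_sub_C_mul_prod_X_add_C_nonpos {s : Finset ι} {μ : ι → R} (hμ : ∀ i ∈ s, 0 ≤ μ i)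
    {a : R} (ha : ∑ i ∈ s, μ i ≤ a) :
    ∀ k ≤ #s, ((X - C a) * ∏ i ∈ s, (X + C (μ i))).coeff k ≤ 0 := by
  have hq := coeff_prod_X_add_C_nonneg hμ
  have hS : 0 ≤ ∑ i ∈ s, μ i := sum_nonneg hμ
  rintro (_ | k) hk
  · rw [mul_coeff_zero, coeff_sub, coeff_X_zero, coeff_C_zero, zero_sub, neg_mul, neg_nonpos]
    exact mul_nonneg (hS.trans ha) (hq 0)
  · rw [coeff_X_sub_C_mul, sub_nonpos]
    calc _ ≤ (∑ i ∈ s, μ i) * _ := coeff_prod_X_add_C_le_sum_mul hμ k hk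
      _ ≤ a * _ := mul_le_mul_of_nonneg_right ha (hq _)

end Order

end Polynomial

open Polynomial

lemma coeff_prod_X_sub_C_nonpos {R : Type*} [CommRing R] [LinearOrder R] [IsStrictOrderedRing R]
    {n : ℕ} {l : Fin n → R} (hsum : 0 ≤ ∑ i, l i) (hneg : ∀ i : Fin n, 0 < (i : ℕ) → l i < 0) :
    ∀ k < n, (∏ i, (X - C (l i))).coeff k ≤ 0 := by
  cases n with
  | zero => simp
  | succ m =>
    have hμ : ∀ i ∈ (univ : Finset (Fin m)), 0 ≤ -l i.succ := fun i _ =>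
      neg_nonneg.2 (hneg i.succ i.succ_pos).le
    have ha : ∑ i : Fin m, -l i.succ ≤ l 0 := by
      rw [Fin.sum_univ_succ] at hsum
      rw [sum_neg_distrib]
      linarith
    have htail : ∏ i : Fin m, (X - C (l i.succ)) = ∏ i : Fin m, (X + C (-l i.succ)) := by
      simp only [map_neg, sub_eq_add_neg]
    intro k hk
    rw [Fin.prod_univ_succ, htail]
    exact coeff_X_sub_C_mul_prod_X_add_C_nonpos hμ ha k (by simpa [Nat.lt_succ_iff] using hk)

theorem realRealizable_of_coeff_nonpos {n : ℕ} {l : Fin n → ℝ}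
    (h : ∀ k < n, (∏ i, (X - C (l i))).coeff k ≤ 0) : RealRealizable l := by
  have hp : (∏ i, (X - C (l i))).Monic := monic_prod_of_monic _ _ fun i _ => monic_X_sub_C (l i)
  have hdeg : (∏ i, (X - C (l i))).natDegree = n := by
    rw [natDegree_prod_of_monic _ _ fun i _ => monic_X_sub_C (l i)]
    simp
  exact ⟨companion n _, companion_nonneg h, charpoly_companion hp hdeg⟩

/-- **Suleimanova's theorem.** If `λ_1 + λ_2 + ⋯ + λ_n ≥ 0` and `λ_k < 0` for
`k = 2, …, n`, then `(λ_1, …, λ_n)` is realizable. -/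
theorem suleimanova (n : ℕ) (l : Fin n → ℝ)
    (hsum : 0 ≤ ∑ i, l i)
    (hneg : ∀ i : Fin n, 0 < (i : ℕ) → l i < 0) :
    RealRealizable l :=
  realRealizable_of_coeff_nonpos (coeff_prod_X_sub_C_nonpos hsum hneg)
end

section
/- (Kellogg's theorem) Let Λ = (λ_1, λ_2, …, λ_n) be a list of real numbers with λ_1 ≥ λ_2 ≥ … ≥ λ_n and λ_1 ≥ 0, and let p be the greatest index j (1 ≤ j ≤ n) for which λ_j ≥ 0. Define the set of indices K = { i ∈ {2, 3, …, ⌊(n+1)/2⌋} : λ_i ≥ 0 and λ_i + λ_{n−i+2} < 0 }. Suppose that: (1) for every k ∈ K, λ_1 ≥ −∑_{i∈K, i<k} (λ_i + λ_{n−i+2}) − λ_{n−k+2}; and (2) if n ≥ 2p, then λ_1 ≥ −∑_{i∈K} (λ_i + λ_{n−i+2}) − ∑_{j=p+1}^{n−p+1} λ_j. Then Λ is realizable. -/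
/-!
Šmigoc's gluing: let `B ≥ 0` have an eigenvalue `t` with nonnegative right and left eigenvectors
`u`, `v` (`v ⬝ᵥ u = 1`), and let `A = [[t, aᵀ], [b, D]] ≥ 0`. Then `[[B, u aᵀ], [b vᵀ, D]] ≥ 0`
has the eigenvalues of `B` and of `A` with one copy of `t` removed (compare the Schur complements
of `x - B` and `x - t`), and it inherits nonnegative eigenvectors for any eigenvalue of `A` that
has them.

Start from the `1 × 1` matrix `λ₁ + ∑_{k ∈ K} (λ_k + λ_{n-k+2}) + ∑_{j=p+1}^{n-p+1} λ_j`, which is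
nonnegative by (2) (by (1) when `n < 2p`). Gluing `2 × 2` blocks adds the negative middle
eigenvalues one at a time, and gluing `3 × 3` blocks adds the pairs `λ_k, λ_{n-k+2}`, `k ∈ K`, in
decreasing order of `k`. Each step raises the Perron value, to
`λ₁ + ∑_{i ∈ K, i < k} (λ_i + λ_{n-i+2})` once the pair `k` is in, and (1) is exactly what keeps
the `3 × 3` block of that step nonnegative.
The remaining eigenvalues are nonnegative or come in pairs with nonnegative sum, which are
realizable on their own, and a block diagonal sum finishes.
-/

open Polynomial Matrix Finset

def IsRealizable (f : ℝ[X]) : Prop :=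
  ∃ (ι : Type) (_ : Fintype ι) (_ : DecidableEq ι) (A : Matrix ι ι ℝ),
    (∀ i j, 0 ≤ A i j) ∧ A.charpoly = f

namespace IsRealizable

theorem one : IsRealizable 1 :=
  ⟨Empty, inferInstance, inferInstance, 0, fun i => i.elim, charpoly_isEmpty⟩

theorem mul {f g : ℝ[X]} (hf : IsRealizable f) (hg : IsRealizable g) :
    IsRealizable (f * g) := by
  obtain ⟨ι, _, _, A, hA, rfl⟩ := hf
  obtain ⟨κ, _, _, B, hB, rfl⟩ := hg
  refine ⟨ι ⊕ κ, inferInstance, inferInstance, fromBlocks A 0 0 B, ?_,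
    charpoly_fromBlocks_zero₁₂ A 0 B⟩
  rintro (i | i) (j | j) <;> simp [hA, hB]

theorem prod {α : Type*} {s : Finset α} {f : α → ℝ[X]} (h : ∀ a ∈ s, IsRealizable (f a)) :
    IsRealizable (∏ a ∈ s, f a) :=
  prod_induction f IsRealizable (fun _ _ => mul) one h

theorem exists_matrix_fin {f : ℝ[X]} (hf : IsRealizable f) {n : ℕ} (hn : f.natDegree = n) :
    ∃ A : Matrix (Fin n) (Fin n) ℝ, (∀ i j, 0 ≤ A i j) ∧ A.charpoly = f := by
  obtain ⟨ι, _, _, A, hA, rfl⟩ := hf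
  let e := Fintype.equivFinOfCardEq (A.charpoly_natDegree_eq_dim.symm.trans hn)
  exact ⟨reindex e e A, fun _ _ => hA _ _, charpoly_reindex e A⟩

end IsRealizable

/-- `!![s, d; d, s]` with `s = (a + b) / 2` and `d = |a - b| / 2` has eigenvalues `s ± d`. -/
theorem isRealizable_X_sub_C_mul_X_sub_C {a b : ℝ} (hab : 0 ≤ a + b) :
    IsRealizable ((X - C a) * (X - C b)) := by
  refine ⟨Fin 2, inferInstance, inferInstance,
    !![(a + b) / 2, |a - b| / 2; |a - b| / 2, (a + b) / 2], ?_, ?_⟩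
  · intro i j
    fin_cases i <;> fin_cases j <;> simp <;> positivity
  · have hdet : (a + b) / 2 * ((a + b) / 2) - |a - b| / 2 * (|a - b| / 2) = a * b := by
      nlinarith [sq_abs (a - b)]
    rw [charpoly_fin_two, trace_fin_two_of, det_fin_two_of, hdet, add_halves, C_add, C_mul]
    ring

namespace Matrix

theorem mulVec_nonneg {ι κ : Type*} [Fintype κ] {A : Matrix ι κ ℝ} (hA : ∀ i j, 0 ≤ A i j)
    {u : κ → ℝ} (hu : ∀ j, 0 ≤ u j) (i : ι) : 0 ≤ (A *ᵥ u) i :=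
  sum_nonneg fun j _ => mul_nonneg (hA i j) (hu j)

theorem vecMul_nonneg {ι κ : Type*} [Fintype ι] {A : Matrix ι κ ℝ} (hA : ∀ i j, 0 ≤ A i j)
    {v : ι → ℝ} (hv : ∀ i, 0 ≤ v i) (j : κ) : 0 ≤ (v ᵥ* A) j :=
  sum_nonneg fun i _ => mul_nonneg (hv i) (hA i j)

def bordered {κ R : Type*} [Zero R] [One R] [Mul R] (t : R) (a b : κ → R) (D : Matrix κ κ R) :
    Matrix (Fin 1 ⊕ κ) (Fin 1 ⊕ κ) R :=
  fromBlocks (of fun _ _ => t) (vecMulVec 1 a) (vecMulVec b 1) D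

variable {ι κ : Type*} [Fintype ι] [DecidableEq ι] [Fintype κ] [DecidableEq κ]

theorem det_fromBlocks_neg_vecMulVec {K : Type*} [Field K] {M : Matrix ι ι K}
    (hM : IsUnit M.det) {u v : ι → K} {s : K} (hu : M *ᵥ u = s • u) (hvu : v ⬝ᵥ u = 1)
    (a b : κ → K) (N : Matrix κ κ K) :
    (fromBlocks M (-vecMulVec u a) (-vecMulVec b v) N).det =
      M.det * (N - s⁻¹ • vecMulVec b a).det := by
  let := M.invertibleOfIsUnitDet hM
  have hinv : v ⬝ᵥ (⅟M *ᵥ u) = s⁻¹ := by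
    refine eq_inv_of_mul_eq_one_right ?_
    rw [← smul_eq_mul, ← dotProduct_smul, ← mulVec_smul, ← hu, mulVec_mulVec, invOf_mul_self,
      one_mulVec, hvu]
  rw [det_fromBlocks₁₁, Matrix.neg_mul, Matrix.neg_mul, Matrix.mul_neg, neg_neg,
    Matrix.mul_assoc, mul_vecMulVec, vecMulVec_mul_vecMulVec, hinv, vecMulVec_smul]

theorem scalar_sub_fromBlocks {R : Type*} [CommRing R] (x : R) (A : Matrix ι ι R)
    (B : Matrix ι κ R) (C : Matrix κ ι R) (D : Matrix κ κ R) :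
    scalar (ι ⊕ κ) x - fromBlocks A B C D =
      fromBlocks (scalar ι x - A) (-B) (-C) (scalar κ x - D) := by
  ext (i | i) (j | j) <;> simp [diagonal_apply]

/-- The spectral half of Šmigoc's gluing: both sides have the same Schur complement at every `x`
outside the spectrum of `B`. -/
theorem charpoly_fromBlocks_vecMulVec_s10 {K : Type*} [Field K] [Infinite K] {B : Matrix ι ι K}
    {u v : ι → K} {t : K} (hu : B *ᵥ u = t • u) (hvu : v ⬝ᵥ u = 1) (a b : κ → K)
    (D : Matrix κ κ K) :
    (X - C t) * (fromBlocks B (vecMulVec u a) (vecMulVec b v) D).charpoly =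
      B.charpoly * (bordered t a b D).charpoly := by
  have hne : (X - C t) * B.charpoly ≠ 0 :=
    mul_ne_zero (X_sub_C_ne_zero t) B.charpoly_monic.ne_zero
  refine eq_of_infinite_eval_eq _ _ ((finite_setOfPred_isRoot hne).infinite_compl.mono ?_)
  intro x hx
  simp only [Set.mem_compl_iff, Set.mem_ofPred_eq, IsRoot, eval_mul, eval_sub, eval_X, eval_C,
    mul_eq_zero, not_or, eval_charpoly, bordered] at hx ⊢
  obtain ⟨hxt, hxB⟩ := hx
  have h1 : (scalar (Fin 1) x - of fun _ _ => t).det = x - t := by simp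
  rw [scalar_sub_fromBlocks, scalar_sub_fromBlocks,
    det_fromBlocks_neg_vecMulVec (isUnit_iff_ne_zero.2 hxB) (s := x - t)
      (by rw [sub_mulVec, hu, sub_smul]; simp) hvu,
    det_fromBlocks_neg_vecMulVec (by simpa [h1] using sub_ne_zero.2 hxt) (s := x - t)
      (by ext i; fin_cases i; simp [mulVec, dotProduct]) (by simp), h1]
  ring

end Matrix

def HasNonnegEigenvectors {ι : Type*} [Fintype ι] (A : Matrix ι ι ℝ) (c : ℝ) : Prop :=
  ∃ u v : ι → ℝ, (∀ i, 0 ≤ u i) ∧ (∀ i, 0 ≤ v i) ∧ A *ᵥ u = c • u ∧ v ᵥ* A = c • v ∧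
    0 < v ⬝ᵥ u

namespace HasNonnegEigenvectors

variable {ι κ : Type*} [Fintype ι] [Fintype κ] {c : ℝ}

theorem nonneg {A : Matrix ι ι ℝ} (h : HasNonnegEigenvectors A c) (hA : ∀ i j, 0 ≤ A i j) :
    0 ≤ c := by
  obtain ⟨u, v, hu, hv, hAu, -, hvu⟩ := h
  have : c * (v ⬝ᵥ u) = v ⬝ᵥ (A *ᵥ u) := by rw [hAu, dotProduct_smul, smul_eq_mul]
  exact nonneg_of_mul_nonneg_left (this ▸ sum_nonneg fun i _ =>
    mul_nonneg (hv i) (mulVec_nonneg hA hu i)) hvu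

theorem exists_normalized {A : Matrix ι ι ℝ} (h : HasNonnegEigenvectors A c) :
    ∃ u v : ι → ℝ, (∀ i, 0 ≤ u i) ∧ (∀ i, 0 ≤ v i) ∧ A *ᵥ u = c • u ∧ v ᵥ* A = c • v ∧
      v ⬝ᵥ u = 1 := by
  obtain ⟨u, v, hu, hv, hAu, hvA, hvu⟩ := h
  refine ⟨u, (v ⬝ᵥ u)⁻¹ • v, hu, fun i => mul_nonneg (inv_nonneg.2 hvu.le) (hv i), hAu, ?_, ?_⟩
  · rw [smul_vecMul, hvA, smul_comm]
  · rw [smul_dotProduct, smul_eq_mul, inv_mul_cancel₀ hvu.ne']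

theorem of_intertwining [DecidableEq κ] {A : Matrix κ κ ℝ} (h : HasNonnegEigenvectors A c)
    {G : Matrix ι ι ℝ} {P : Matrix ι κ ℝ} {Q : Matrix κ ι ℝ} (hP : ∀ i j, 0 ≤ P i j)
    (hQ : ∀ i j, 0 ≤ Q i j) (hGP : G * P = P * A) (hQG : Q * G = A * Q) (hQP : Q * P = 1) :
    HasNonnegEigenvectors G c := by
  obtain ⟨u, v, hu, hv, hAu, hvA, hvu⟩ := h
  refine ⟨P *ᵥ u, v ᵥ* Q, mulVec_nonneg hP hu, vecMul_nonneg hQ hv, ?_, ?_, ?_⟩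
  · rw [mulVec_mulVec, hGP, ← mulVec_mulVec, hAu, mulVec_smul]
  · rw [vecMul_vecMul, hQG, ← vecMul_vecMul, hvA, smul_vecMul]
  · rwa [← dotProduct_mulVec, mulVec_mulVec, hQP, one_mulVec]

theorem submatrix {A : Matrix ι ι ℝ} (h : HasNonnegEigenvectors A c) (e : κ ≃ ι) :
    HasNonnegEigenvectors (A.submatrix e e) c := by
  obtain ⟨u, v, hu, hv, hAu, hvA, hvu⟩ := h
  refine ⟨u ∘ e, v ∘ e, fun _ => hu _, fun _ => hv _, ?_, ?_, ?_⟩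
  · rw [submatrix_mulVec_equiv, Function.comp_assoc, e.self_comp_symm, Function.comp_id, hAu]
    rfl
  · rw [submatrix_vecMul_equiv, Function.comp_assoc, e.self_comp_symm, Function.comp_id, hvA]
    rfl
  · rwa [← dotProduct_comp_equiv_symm, Function.comp_assoc, e.self_comp_symm, Function.comp_id]

/-- The eigenvector half of Šmigoc's gluing. -/
theorem fromBlocks_vecMulVec [DecidableEq ι] [DecidableEq κ] {B : Matrix ι ι ℝ} {u v : ι → ℝ}
    {t : ℝ} (hu : ∀ i, 0 ≤ u i) (hv : ∀ i, 0 ≤ v i) (hBu : B *ᵥ u = t • u)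
    (hvB : v ᵥ* B = t • v) (hvu : v ⬝ᵥ u = 1) {a b : κ → ℝ} {D : Matrix κ κ ℝ}
    (h : HasNonnegEigenvectors (bordered t a b D) c) :
    HasNonnegEigenvectors (fromBlocks B (vecMulVec u a) (vecMulVec b v) D) c := by
  have h1t : (1 : Fin 1 → ℝ) ᵥ* (of fun _ _ => t : Matrix (Fin 1) (Fin 1) ℝ) = t • 1 := by
    ext; simp [vecMul, dotProduct]
  have ht1 : (of fun _ _ => t : Matrix (Fin 1) (Fin 1) ℝ) *ᵥ 1 = t • 1 := by
    ext; simp [mulVec, dotProduct]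
  have h11 : (1 : Fin 1 → ℝ) ⬝ᵥ 1 = 1 := by simp [dotProduct]
  refine h.of_intertwining (P := fromBlocks (vecMulVec u 1) 0 0 1)
    (Q := fromBlocks (vecMulVec 1 v) 0 0 1) ?_ ?_ ?_ ?_ ?_
  · rintro (i | i) (j | j) <;> simp [hu, one_apply, apply_ite]
  · rintro (i | i) (j | j) <;> simp [hv, one_apply, apply_ite]
  · rw [bordered, fromBlocks_multiply, fromBlocks_multiply]
    simp only [Matrix.mul_zero, Matrix.zero_mul, add_zero, zero_add, Matrix.mul_one,
      Matrix.one_mul, vecMulVec_mul_vecMulVec, hvu, h11, one_smul]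
    simp only [mul_vecMulVec, vecMulVec_mul, hBu, h1t, vecMulVec_smul, smul_vecMulVec]
  · rw [bordered, fromBlocks_multiply, fromBlocks_multiply]
    simp only [Matrix.mul_zero, Matrix.zero_mul, add_zero, zero_add, Matrix.mul_one,
      Matrix.one_mul, vecMulVec_mul_vecMulVec, hvu, h11, one_smul]
    simp only [mul_vecMulVec, vecMulVec_mul, hvB, ht1, vecMulVec_smul, smul_vecMulVec]
  · rw [fromBlocks_multiply, ← fromBlocks_one]
    simp only [Matrix.mul_zero, Matrix.zero_mul, add_zero, zero_add, Matrix.mul_one,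
      vecMulVec_mul_vecMulVec, hvu, one_smul]
    congr
    ext i j
    rw [Subsingleton.elim i j]
    simp

end HasNonnegEigenvectors

/-- Realizability of `(X - C c) * g` by a matrix to which further blocks can be glued at `c`. -/
def IsPerronRealizable (c : ℝ) (g : ℝ[X]) : Prop :=
  ∃ (ι : Type) (_ : Fintype ι) (_ : DecidableEq ι) (A : Matrix ι ι ℝ),
    (∀ i j, 0 ≤ A i j) ∧ A.charpoly = (X - C c) * g ∧ HasNonnegEigenvectors A c

theorem isPerronRealizable_one {c : ℝ} (hc : 0 ≤ c) : IsPerronRealizable c 1 := by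
  refine ⟨Unit, inferInstance, inferInstance, of fun _ _ => c, fun _ _ => hc, ?_,
    1, 1, fun _ => zero_le_one, fun _ => zero_le_one, ?_, ?_, by simp⟩
  · rw [mul_one, charpoly, det_unique, charmatrix_apply_eq]
    rfl
  · ext; simp [mulVec, dotProduct]
  · ext; simp [vecMul, dotProduct]

/-- The entries `p`, `r` of the block `!![c + a + b, p, 0; 1, 0, r; 0, 1, 0]` below: its
characteristic polynomial is `X³ - (c + a + b) X² - (p + r) X + (c + a + b) r`. -/
theorem exists_coeffs_of_pair {c a b : ℝ} (ha : 0 ≤ a) (hab : a + b < 0) (hcb : 0 ≤ c + b) :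
    ∃ p r : ℝ, 0 ≤ p ∧ 0 ≤ r ∧ p + r = -(c * a + c * b + a * b) ∧
      (c + a + b) * r = -(c * a * b) := by
  rcases (show 0 ≤ c + a + b by linarith).eq_or_lt with h | h
  · have ha0 : a = 0 := by linarith
    refine ⟨c ^ 2, 0, sq_nonneg c, le_rfl, ?_, ?_⟩
    · rw [ha0, show b = -c by linarith]
      ring
    · rw [← h, ha0]
      ring
  · refine ⟨-(a + b) * (c + a) * (c + b) / (c + a + b), -(c * a * b) / (c + a + b),
      div_nonneg ?_ h.le, div_nonneg ?_ h.le, ?_, ?_⟩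
    · exact mul_nonneg (mul_nonneg (by linarith) (by linarith)) hcb
    · nlinarith [mul_nonneg (mul_nonneg (show 0 ≤ c by linarith) ha) (show 0 ≤ -b by linarith)]
    · field_simp
      ring
    · field_simp

theorem exists_fin_three_of_pair {c a b : ℝ} (ha : 0 ≤ a) (hab : a + b < 0) (hcb : 0 ≤ c + b) :
    ∃ A : Matrix (Fin 3) (Fin 3) ℝ, (∀ i j, 0 ≤ A i j) ∧ A 0 0 = c + a + b ∧
      A.charpoly = (X - C c) * ((X - C a) * (X - C b)) ∧ HasNonnegEigenvectors A c := by
  obtain ⟨p, r, hp, hr, hpr, htr⟩ := exists_coeffs_of_pair ha hab hcb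
  generalize ht : c + a + b = t at htr
  have hc : 0 < c := by linarith
  have hct : 0 < c - t := by linarith
  have ht0 : 0 ≤ t := by linarith
  have hpc : p * c = (c ^ 2 - r) * (c - t) := by
    linear_combination c * hpr - htr - c ^ 2 * ht
  have hx : 0 ≤ c ^ 2 - r := nonneg_of_mul_nonneg_left (hpc ▸ mul_nonneg hp hc.le) hct
  refine ⟨!![t, p, 0; 1, 0, r; 0, 1, 0], ?_, rfl, ?_, ?_⟩
  · intro i j
    fin_cases i <;> fin_cases j <;> simp [hp, hr, ht0]
  · rw [charpoly, det_fin_three]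
    simp only [charmatrix_apply_eq, charmatrix_apply_ne, ne_eq, Fin.reduceEq, not_false_eq_true,
      of_apply, cons_val', cons_val_zero, cons_val_one, Matrix.cons_val, cons_val_fin_one, map_zero,
      map_one, Fin.isValue]
    have hpr' := congrArg C hpr
    have htr' := congrArg C htr
    have ht' := congrArg C ht
    simp only [map_add, map_mul, map_neg] at hpr' htr' ht'
    linear_combination (-X) * hpr' + htr' + X ^ 2 * ht'
  · refine ⟨![c ^ 2 - r, c, 1], ![c, c * (c - t), r * (c - t)], ?_, ?_, ?_, ?_, ?_⟩
    · intro i; fin_cases i <;> simp [hx, hc.le]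
    · intro i; fin_cases i <;> simp [hc.le] <;> positivity
    · ext i
      fin_cases i <;> simp
      · linear_combination hpc
      · ring
    · ext i
      fin_cases i <;> simp
      · ring
      · linear_combination hpc
      · ring
    · simp only [dotProduct_cons, dotProduct_of_isEmpty, head_cons, tail_cons]
      nlinarith [mul_pos (mul_pos hc hc) hct, mul_nonneg hr hct.le, mul_nonneg hc.le hx]

namespace IsPerronRealizable

variable {t c : ℝ} {g q : ℝ[X]}

theorem isRealizable (h : IsPerronRealizable c g) : IsRealizable ((X - C c) * g) := by
  obtain ⟨ι, _, _, A, hA, hAc, -⟩ := h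
  exact ⟨ι, _, _, A, hA, hAc⟩

theorem nonneg (h : IsPerronRealizable c g) : 0 ≤ c := by
  obtain ⟨_, _, _, A, hA, -, hAe⟩ := h
  exact hAe.nonneg hA

theorem glue (hg : IsPerronRealizable t g) {κ : Type} [Fintype κ] [DecidableEq κ]
    {A : Matrix (Fin 1 ⊕ κ) (Fin 1 ⊕ κ) ℝ} (hA : ∀ i j, 0 ≤ A i j)
    (hAt : A (.inl 0) (.inl 0) = t) (hAc : A.charpoly = (X - C c) * q)
    (hAe : HasNonnegEigenvectors A c) : IsPerronRealizable c (q * g) := by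
  obtain ⟨ι, _, _, B, hB, hBc, hBe⟩ := hg
  obtain ⟨u, v, hu, hv, hBu, hvB, hvu⟩ := hBe.exists_normalized
  set a := fun j => A (.inl 0) (.inr j)
  set b := fun i => A (.inr i) (.inl 0)
  have hAb : A = bordered t a b A.toBlocks₂₂ := by
    ext (i | i) (j | j) <;> simp [bordered, Fin.fin_one_eq_zero, hAt, a, b, toBlocks₂₂]
  refine ⟨ι ⊕ κ, inferInstance, inferInstance,
    fromBlocks B (vecMulVec u a) (vecMulVec b v) A.toBlocks₂₂, ?_, ?_,
    (hAb ▸ hAe).fromBlocks_vecMulVec hu hv hBu hvB hvu⟩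
  · rintro (i | i) (j | j)
    · exact hB i j
    · exact mul_nonneg (hu i) (hA _ _)
    · exact mul_nonneg (hA _ _) (hv j)
    · exact hA _ _
  · refine mul_left_cancel₀ (X_sub_C_ne_zero t) ?_
    rw [charpoly_fromBlocks_vecMulVec_s10 hBu hvu, ← hAb, hBc, hAc]
    ring

theorem glue_fin (hg : IsPerronRealizable t g) {k : ℕ}
    {A : Matrix (Fin (1 + k)) (Fin (1 + k)) ℝ} (hA : ∀ i j, 0 ≤ A i j) (hAt : A 0 0 = t)
    (hAc : A.charpoly = (X - C c) * q) (hAe : HasNonnegEigenvectors A c) :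
    IsPerronRealizable c (q * g) :=
  hg.glue (A := A.submatrix finSumFinEquiv finSumFinEquiv) (fun _ _ => hA _ _) hAt
    ((charpoly_reindex finSumFinEquiv.symm A).trans hAc) (hAe.submatrix _)

theorem X_sub_C_mul {μ : ℝ} (hg : IsPerronRealizable (c + μ) g) (hμ : μ < 0) :
    IsPerronRealizable c ((X - C μ) * g) := by
  have ht : 0 ≤ c + μ := hg.nonneg
  refine hg.glue_fin (k := 1) (A := !![c + μ, -μ; c, 0]) ?_ rfl ?_ ?_
  · intro i j
    fin_cases i <;> fin_cases j <;> simp <;> linarith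
  · rw [charpoly_fin_two, trace_fin_two_of, det_fin_two_of]
    simp only [map_add, map_sub, map_mul, map_neg, map_zero]
    ring
  · refine ⟨![1, 1], ![c, -μ], ?_, ?_, ?_, ?_, ?_⟩
    · intro i; fin_cases i <;> simp
    · intro i; fin_cases i <;> simp <;> linarith
    · ext i; fin_cases i <;> simp
    · ext i; fin_cases i <;> simp; ring
    · simp only [dotProduct_cons, dotProduct_of_isEmpty, head_cons, tail_cons]
      linarith

theorem X_sub_C_mul_X_sub_C_mul {a b : ℝ} (hg : IsPerronRealizable (c + a + b) g) (ha : 0 ≤ a)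
    (hab : a + b < 0) (hcb : 0 ≤ c + b) :
    IsPerronRealizable c ((X - C a) * (X - C b) * g) := by
  obtain ⟨A, hA, hAt, hAc, hAe⟩ := exists_fin_three_of_pair ha hab hcb
  exact hg.glue_fin (k := 2) hA hAt hAc hAe

theorem prod_X_sub_C_mul {ι : Type*} (S : Finset ι) {μ : ι → ℝ} (hμ : ∀ j ∈ S, μ j < 0)
    (h : IsPerronRealizable (c + ∑ j ∈ S, μ j) g) :
    IsPerronRealizable c ((∏ j ∈ S, (X - C (μ j))) * g) := by
  classical
  induction S using Finset.induction_on generalizing c with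
  | empty => simpa using h
  | insert j S hj ih =>
    rw [sum_insert hj, ← add_assoc] at h
    rw [prod_insert hj, mul_assoc]
    exact (ih (fun i hi => hμ i (mem_insert_of_mem hi)) h).X_sub_C_mul (hμ j (mem_insert_self j S))

theorem prod_X_sub_C_mul_X_sub_C_mul {ι : Type*} [LinearOrder ι] (K : Finset ι) {α β : ι → ℝ}
    (hα : ∀ k ∈ K, 0 ≤ α k) (hαβ : ∀ k ∈ K, α k + β k < 0)
    (hK : ∀ k ∈ K, 0 ≤ c + ∑ i ∈ K with i < k, (α i + β i) + β k)
    (h : IsPerronRealizable (c + ∑ k ∈ K, (α k + β k)) g) :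
    IsPerronRealizable c ((∏ k ∈ K, (X - C (α k)) * (X - C (β k))) * g) := by
  induction K using Finset.induction_on_min generalizing c with
  | empty => simpa using h
  | insert a K haK ih =>
    have ha : a ∉ K := fun h => lt_irrefl a (haK a h)
    have hK' : ∀ k ∈ K, 0 ≤ c + (α a + β a) + ∑ i ∈ K with i < k, (α i + β i) + β k := by
      intro k hk
      have := hK k (mem_insert_of_mem hk)
      rwa [filter_insert, if_pos (haK k hk), sum_insert (fun h => ha (mem_filter.1 h).1),
        ← add_assoc] at this
    have hcb : 0 ≤ c + β a := by
      have := hK a (mem_insert_self a K)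
      rwa [filter_eq_empty_iff.2 fun i hi => ?_, sum_empty, add_zero] at this
      rcases mem_insert.1 hi with rfl | hi
      exacts [lt_irrefl i, (haK i hi).not_gt]
    rw [sum_insert ha, ← add_assoc] at h
    rw [prod_insert ha, mul_assoc]
    refine X_sub_C_mul_X_sub_C_mul ?_ (hα a (mem_insert_self a K)) (hαβ a (mem_insert_self a K)) hcb
    rw [add_assoc c]
    exact ih (fun k hk => hα k (mem_insert_of_mem hk)) (fun k hk => hαβ k (mem_insert_of_mem hk))
      hK' h

end IsPerronRealizable

theorem isRealizable_X_sub_C {a : ℝ} (ha : 0 ≤ a) : IsRealizable (X - C a) := by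
  simpa using (isPerronRealizable_one ha).isRealizable

theorem add_sum_nonneg_of_forall_lt {ι : Type*} [LinearOrder ι] {K : Finset ι} {c : ℝ}
    {α β : ι → ℝ} (hc : 0 ≤ c) (hα : ∀ k ∈ K, 0 ≤ α k)
    (hK : ∀ k ∈ K, 0 ≤ c + ∑ i ∈ K with i < k, (α i + β i) + β k) :
    0 ≤ c + ∑ k ∈ K, (α k + β k) := by
  rcases K.eq_empty_or_nonempty with rfl | hne
  · simpa using hc
  have hmax := K.max'_mem hne
  have hfilter : ({i ∈ K | i < K.max' hne} : Finset ι) = K.erase (K.max' hne) := by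
    ext i
    simp only [mem_filter, mem_erase]
    exact ⟨fun h => ⟨h.2.ne, h.1⟩, fun h => ⟨h.2, (K.le_max' i h.2).lt_of_ne h.1⟩⟩
  have := hK _ hmax
  rw [hfilter] at this
  rw [← add_sum_erase K _ hmax]
  linarith [hα _ hmax]

namespace Finset

theorem prod_Icc_eq_prod_Ico_mul_reflect_mul {M : Type*} [CommMonoid M] (f : ℕ → M)
    {N a b : ℕ} (hab : a ≤ b) (hb : b ≤ N + 1 - b) :
    ∏ i ∈ Icc a (N - a), f i = (∏ k ∈ Ico a b, f k * f (N - k)) * ∏ i ∈ Icc b (N - b), f i := by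
  rw [← Ico_add_one_right_eq_Icc, ← Ico_add_one_right_eq_Icc, show N - a + 1 = N + 1 - a by omega,
    show N - b + 1 = N + 1 - b by omega, ← prod_Ico_consecutive f hab (by omega : b ≤ N + 1 - a),
    ← prod_Ico_consecutive f hb (by omega : N + 1 - b ≤ N + 1 - a), prod_mul_distrib,
    prod_Ico_reflect f a (by omega : b ≤ N + 1)]
  rw [mul_assoc (∏ x ∈ Ico a b, f x), mul_comm (∏ j ∈ Ico (N + 1 - b) (N + 1 - a), f j)]

theorem prod_Icc_one_eq_mul_prod_pairs_mul {M : Type*} [CommMonoid M] (f : ℕ → M) {n q : ℕ}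
    (hq : 1 ≤ q) (hqn : 2 * q ≤ n + 1) :
    ∏ i ∈ Icc 1 n, f i =
      f 1 * (∏ k ∈ Ico 2 (q + 1), f k * f (n - k + 2)) * ∏ i ∈ Icc (q + 1) (n + 1 - q), f i := by
  have h := prod_Icc_eq_prod_Ico_mul_reflect_mul f (N := n + 2) (a := 2) (b := q + 1)
    (by omega) (by omega)
  rw [Nat.add_sub_cancel, show n + 2 - (q + 1) = n + 1 - q by omega] at h
  rw [← insert_Icc_add_one_left_eq_Icc (by omega : 1 ≤ n), prod_insert (by simp),
    one_add_one_eq_two, h, mul_assoc]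
  congr 2
  exact prod_congr rfl fun k hk => by rw [show n + 2 - k = n - k + 2 by simp at hk; omega]

end Finset

theorem nonneg_iff_le_of_antitone {n p : ℕ} {l : ℕ → ℝ}
    (hanti : ∀ i j, 1 ≤ i → i ≤ j → j ≤ n → l j ≤ l i) (hpn : p ≤ n) (hlp : 0 ≤ l p)
    (hgreatest : ∀ j, p < j → j ≤ n → l j < 0) {i : ℕ} (hi : 1 ≤ i) (hin : i ≤ n) :
    0 ≤ l i ↔ i ≤ p :=
  ⟨fun h => not_lt.1 fun hpi => (hgreatest i hpi hin).not_ge h,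
    fun h => hlp.trans (hanti i p hi h hpn)⟩

theorem filter_Icc_nonneg_and_eq_filter_Ico {n p : ℕ} {l : ℕ → ℝ} {P : ℕ → Prop}
    [DecidablePred P] (hl : ∀ {i}, 1 ≤ i → i ≤ n → (0 ≤ l i ↔ i ≤ p)) :
    (Icc 2 ((n + 1) / 2)).filter (fun i => 0 ≤ l i ∧ P i) =
      (Ico 2 (min p ((n + 1) / 2) + 1)).filter P := by
  ext i
  simp only [mem_filter, mem_Icc, mem_Ico]
  constructor
  · rintro ⟨⟨h2i, him⟩, hli, hP⟩
    have := (hl (by omega) (by omega)).1 hli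
    exact ⟨⟨h2i, by omega⟩, hP⟩
  · rintro ⟨⟨h2i, hiq⟩, hP⟩
    exact ⟨⟨h2i, by omega⟩, (hl (by omega) (by omega)).2 (by omega), hP⟩

theorem kellogg_general (n : ℕ) (l : ℕ → ℝ)
    (hanti : ∀ i j, 1 ≤ i → i ≤ j → j ≤ n → l j ≤ l i)
    (hl1 : 0 ≤ l 1)
    (p : ℕ) (hp1 : 1 ≤ p) (hpn : p ≤ n) (hlp : 0 ≤ l p)
    (hgreatest : ∀ j, p < j → j ≤ n → l j < 0)
    (K : Finset ℕ)
    (hK : K = (Finset.Icc 2 ((n + 1) / 2)).filter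
      (fun i => 0 ≤ l i ∧ l i + l (n - i + 2) < 0))
    (h1 : ∀ k ∈ K,
      -(∑ i ∈ K.filter (fun i => i < k), (l i + l (n - i + 2))) - l (n - k + 2) ≤ l 1)
    (h2 : 2 * p ≤ n →
      -(∑ i ∈ K, (l i + l (n - i + 2))) - ∑ j ∈ Finset.Icc (p + 1) (n - p + 1), l j ≤ l 1) :
    ∃ A : Matrix (Fin n) (Fin n) ℝ, (∀ i j, 0 ≤ A i j) ∧
      A.charpoly = ∏ i ∈ Finset.Icc 1 n, (X - C (l i)) := by
  have hl := fun {i} => nonneg_iff_le_of_antitone hanti hpn hlp hgreatest (i := i)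
  set q := min p ((n + 1) / 2)
  set S := Icc (p + 1) (n - p + 1)
  have hKmem : ∀ k ∈ K, 0 ≤ l k ∧ l k + l (n - k + 2) < 0 := fun k hk => by
    rw [hK, mem_filter] at hk
    exact hk.2
  have hKfilter := hK.trans (filter_Icc_nonneg_and_eq_filter_Ico hl)
  have h1' : ∀ k ∈ K, 0 ≤ l 1 + ∑ i ∈ K with i < k, (l i + l (n - i + 2)) + l (n - k + 2) :=
    fun k hk => by linarith [h1 k hk]
  have hbase : 0 ≤ l 1 + ∑ k ∈ K, (l k + l (n - k + 2)) + ∑ j ∈ S, l j := by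
    by_cases h2p : 2 * p ≤ n
    · linarith [h2 h2p]
    · rw [show S = ∅ from Icc_eq_empty (by omega), sum_empty, add_zero]
      exact add_sum_nonneg_of_forall_lt hl1 (fun k hk => (hKmem k hk).1) h1'
  have hS : ∀ j ∈ S, l j < 0 := fun j hj => by
    simp only [S, mem_Icc] at hj
    exact hgreatest j (by omega) (by omega)
  have hcore := ((isPerronRealizable_one hbase).prod_X_sub_C_mul S hS).prod_X_sub_C_mul_X_sub_C_mul
    K (fun k hk => (hKmem k hk).1) (fun k hk => (hKmem k hk).2) h1'
  have hpairs : IsRealizable (∏ k ∈ Ico 2 (q + 1) with ¬l k + l (n - k + 2) < 0,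
      (X - C (l k)) * (X - C (l (n - k + 2)))) :=
    IsRealizable.prod fun k hk => isRealizable_X_sub_C_mul_X_sub_C (not_lt.1 (mem_filter.1 hk).2)
  have hrest : IsRealizable (∏ j ∈ Icc (q + 1) (n + 1 - q) \ S, (X - C (l j))) :=
    IsRealizable.prod fun j hj => isRealizable_X_sub_C <| by
      simp only [S, mem_sdiff, mem_Icc] at hj
      exact (hl (by omega) (by omega)).2 (by omega)
  have hprod : ∏ i ∈ Icc 1 n, (X - C (l i)) =
      (X - C (l 1)) * ((∏ k ∈ K, (X - C (l k)) * (X - C (l (n - k + 2)))) *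
        ((∏ j ∈ S, (X - C (l j))) * 1)) *
      ((∏ k ∈ Ico 2 (q + 1) with ¬l k + l (n - k + 2) < 0,
        (X - C (l k)) * (X - C (l (n - k + 2)))) *
        ∏ j ∈ Icc (q + 1) (n + 1 - q) \ S, (X - C (l j))) := by
    rw [prod_Icc_one_eq_mul_prod_pairs_mul (q := q) _ (by omega) (by omega),
      ← prod_filter_mul_prod_filter_not _ (fun k => l k + l (n - k + 2) < 0), ← hKfilter,
      ← prod_sdiff (Icc_subset_Icc (by omega) (by omega) : S ⊆ Icc (q + 1) (n + 1 - q))]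
    ring
  exact (hprod ▸ hcore.isRealizable.mul (hpairs.mul hrest)).exists_matrix_fin (by simp)

/-- **Kellogg's theorem.** Here the list is `(l 1, …, l n)` (one-based indices).
Suppose `λ_1 ≥ λ_2 ≥ ⋯ ≥ λ_n` with `λ_1 ≥ 0`, `p` is the greatest index `j` with
`λ_j ≥ 0`, and `K = {i ∈ {2, …, ⌊(n+1)/2⌋} : λ_i ≥ 0 ∧ λ_i + λ_{n-i+2} < 0}`.
If (1) for every `k ∈ K`, `λ_1 ≥ -∑_{i ∈ K, i < k} (λ_i + λ_{n-i+2}) - λ_{n-k+2}`,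
and (2) if `n ≥ 2p` then
`λ_1 ≥ -∑_{i ∈ K} (λ_i + λ_{n-i+2}) - ∑_{j=p+1}^{n-p+1} λ_j`,
then `(λ_1, …, λ_n)` is realizable. -/
theorem kellogg (n : ℕ) (hn : 1 ≤ n) (l : ℕ → ℝ)
    (hanti : ∀ i j, 1 ≤ i → i ≤ j → j ≤ n → l j ≤ l i)
    (hl1 : 0 ≤ l 1)
    (p : ℕ) (hp1 : 1 ≤ p) (hpn : p ≤ n) (hlp : 0 ≤ l p)
    (hgreatest : ∀ j, p < j → j ≤ n → l j < 0)
    (K : Finset ℕ)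
    (hK : K = (Finset.Icc 2 ((n + 1) / 2)).filter
      (fun i => 0 ≤ l i ∧ l i + l (n - i + 2) < 0))
    (h1 : ∀ k ∈ K,
      -(∑ i ∈ K.filter (fun i => i < k), (l i + l (n - i + 2))) - l (n - k + 2) ≤ l 1)
    (h2 : 2 * p ≤ n →
      -(∑ i ∈ K, (l i + l (n - i + 2))) - ∑ j ∈ Finset.Icc (p + 1) (n - p + 1), l j ≤ l 1) :
    ∃ A : Matrix (Fin n) (Fin n) ℝ, (∀ i j, 0 ≤ A i j) ∧
      A.charpoly = ∏ i ∈ Finset.Icc 1 n, (X - C (l i)) :=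
  kellogg_general n l hanti hl1 p hp1 hpn hlp hgreatest K hK h1 h2
end

section
/- Let λ ≥ 0 be a real number and let μ_1, …, μ_r be negative real numbers with s = ∑_{j=1}^r μ_j < 0. Then for every δ ≥ 0, the two-element list (λ + δ, s) is realizable if and only if the (r+1)-element list (λ + δ, μ_1, …, μ_r) is realizable. Consequently the lists (λ, s) and (λ, μ_1, …, μ_r) have the same Brauer negativity, where the Brauer negativity of a list (λ_1, λ_2, …, λ_n) is N(Λ) = min{ δ ≥ 0 : (λ_1 + δ, λ_2, …, λ_n) is realizable }. -/
open Polynomial Matrix Finset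

/-! Both lists fall under Suleimanova's criterion: a list `(a, μ₁, …, μᵣ)` with all `μⱼ ≤ 0`
is realizable iff `a + ∑ μⱼ ≥ 0`. Necessity is the nonnegativity of the trace. For sufficiency,
`f = (X - a) ∏ (X - μⱼ)` has nonpositive coefficients below the leading one, so the companion
matrix of `f`, i.e. the matrix of multiplication by `X` on `K[X] ⧸ (f)` in the power basis, is
nonnegative with characteristic polynomial `f`. Hence each of `(λ + δ, s)` and
`(λ + δ, μ₁, …, μᵣ)` is realizable exactly when `λ + δ + s ≥ 0`. -/

section OrderedField

variable {K : Type*} [Field K] [LinearOrder K] [IsStrictOrderedRing K]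

theorem Polynomial.coeff_prod_X_add_C_nonneg_s12 {ι : Type*} (s : Finset ι) {α : ι → K}
    (hα : ∀ i, 0 ≤ α i) (k : ℕ) : 0 ≤ (∏ i ∈ s, (X + C (α i))).coeff k := by
  refine Finset.prod_induction _ (fun p : K[X] => ∀ k, 0 ≤ p.coeff k) ?_ ?_ ?_ k
  · intro p q hp hq k
    rw [coeff_mul]
    exact sum_nonneg fun x _ => mul_nonneg (hp _) (hq _)
  · intro k
    rw [coeff_one]
    split_ifs <;> norm_num
  · intro i _ k
    rw [coeff_add, coeff_X, coeff_C]
    split_ifs <;> linarith [hα i]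

theorem Polynomial.coeff_X_sub_C_mul_prod_X_add_C_nonpos_s12 {ι : Type*} [DecidableEq ι]
    (s : Finset ι) {α : ι → K} (hα : ∀ i, 0 ≤ α i) {a : K} (ha : ∑ i ∈ s, α i ≤ a)
    {k : ℕ} (hk : k ≤ #s) : ((X - C a) * ∏ i ∈ s, (X + C (α i))).coeff k ≤ 0 := by
  induction s using Finset.induction_on generalizing a k with
  | empty =>
    obtain rfl : k = 0 := by simpa using hk
    simpa using ha
  | insert i s hi ih =>
    rw [sum_insert hi] at ha
    have ha0 : 0 ≤ a := (add_nonneg (hα i) (sum_nonneg fun j _ => hα j)).trans ha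
    -- `(X - a)(X + b) = X (X - (a - b)) - ab`: induction handles the first term, and the
    -- second has nonnegative coefficients.
    have hsplit : (X - C a) * ∏ j ∈ insert i s, (X + C (α j)) =
        (X - C (a - α i)) * (∏ j ∈ s, (X + C (α j))) * X -
          C (a * α i) * ∏ j ∈ s, (X + C (α j)) := by
      rw [prod_insert hi, C_sub, C_mul]; ring
    have hC : 0 ≤ (C (a * α i) * ∏ j ∈ s, (X + C (α j))).coeff k := by
      rw [coeff_C_mul]
      exact mul_nonneg (mul_nonneg ha0 (hα i)) (coeff_prod_X_add_C_nonneg_s12 s hα k)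
    rw [hsplit, coeff_sub]
    cases k with
    | zero => rw [coeff_mul_X_zero]; linarith
    | succ k =>
      rw [coeff_mul_X]
      have hk' : k ≤ #s := by rw [card_insert_of_notMem hi] at hk; omega
      linarith [ih (a := a - α i) (by linarith) hk']

theorem exists_nonneg_matrix_charpoly_eq {n : ℕ} {f : K[X]} (hf : f.Monic)
    (hdeg : f.natDegree = n) (hcoeff : ∀ k < n, f.coeff k ≤ 0) :
    ∃ A : Matrix (Fin n) (Fin n) K, (∀ i j, 0 ≤ A i j) ∧ A.charpoly = f := by
  let pb := AdjoinRoot.powerBasis hf.ne_zero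
  have hmin : pb.minpolyGen = f := by
    rw [pb.minpolyGen_eq]; exact AdjoinRoot.minpoly_powerBasis_gen_of_monic hf
  have hdim : pb.dim = n := hdeg
  refine ⟨reindex (finCongr hdim) (finCongr hdim) (Algebra.leftMulMatrix pb.basis pb.gen),
    fun i j => ?_, ?_⟩
  · rw [reindex_apply, submatrix_apply, pb.leftMulMatrix, of_apply, hmin]
    split_ifs
    · exact neg_nonneg.mpr (hcoeff i i.2)
    · exact zero_le_one
    · exact le_rfl
  · rw [charpoly_reindex, charpoly_leftMulMatrix, ← pb.minpolyGen_eq, hmin]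

end OrderedField

theorem RealRealizable.sum_nonneg {n : ℕ} {l : Fin n → ℝ} (h : RealRealizable l) :
    0 ≤ ∑ i, l i := by
  obtain ⟨A, hA, hchar⟩ := h
  have htrace : A.trace = ∑ i, l i := by
    rw [trace_eq_neg_charpoly_nextCoeff, hchar, prod_X_sub_C_nextCoeff, neg_neg]
  exact htrace ▸ Finset.sum_nonneg fun i _ => hA i i

theorem realRealizable_cons_iff {r : ℕ} (a : ℝ) {μ : Fin r → ℝ} (hμ : ∀ j, μ j ≤ 0) :
    RealRealizable (Fin.cons a μ : Fin (r + 1) → ℝ) ↔ 0 ≤ a + ∑ j, μ j := by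
  refine ⟨fun h => by simpa [Fin.sum_cons] using h.sum_nonneg, fun hsum => ?_⟩
  have hf : ∏ i, (X - C ((Fin.cons a μ : Fin (r + 1) → ℝ) i)) =
      (X - C a) * ∏ j, (X + C (-μ j)) := by
    simp [Fin.prod_univ_succ, sub_eq_add_neg]
  refine exists_nonneg_matrix_charpoly_eq (monic_prod_of_monic _ _ fun i _ => monic_X_sub_C _)
    ?_ fun k hk => ?_
  · rw [natDegree_prod _ _ fun i _ => X_sub_C_ne_zero _]
    simp
  · rw [hf]
    refine coeff_X_sub_C_mul_prod_X_add_C_nonpos_s12 _ (fun j => neg_nonneg.mpr (hμ j)) ?_ ?_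
    · rw [sum_neg_distrib]; linarith
    · simpa using Nat.lt_succ_iff.mp hk

theorem same_brauer_negativity_general (lam : ℝ) (r : ℕ)
    (μ : Fin r → ℝ) (hμ : ∀ j, μ j < 0) (s : ℝ) (hs : s = ∑ j, μ j) (hs0 : s < 0) :
    (∀ δ : ℝ, 0 ≤ δ →
      (RealRealizable ![lam + δ, s] ↔ RealRealizable (Fin.cons (lam + δ) μ))) ∧
    sInf {δ : ℝ | 0 ≤ δ ∧ RealRealizable ![lam + δ, s]} =
      sInf {δ : ℝ | 0 ≤ δ ∧ RealRealizable (Fin.cons (lam + δ) μ)} := by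
  have hiff : ∀ δ : ℝ,
      RealRealizable ![lam + δ, s] ↔ RealRealizable (Fin.cons (lam + δ) μ) := by
    intro δ
    have hpair : RealRealizable ![lam + δ, s] ↔ 0 ≤ lam + δ + s := by
      simpa using realRealizable_cons_iff (lam + δ) (μ := ![s]) (Fin.forall_fin_one.mpr hs0.le)
    rw [hpair, realRealizable_cons_iff _ fun j => (hμ j).le, hs]
  refine ⟨fun δ _ => hiff δ, ?_⟩
  simp only [hiff]

/-- Let `λ ≥ 0` and let `μ_1, …, μ_r < 0` with `s = ∑ μ_j < 0`. Then for every
`δ ≥ 0`, `(λ + δ, s)` is realizable iff `(λ + δ, μ_1, …, μ_r)` is realizable; in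
particular the lists `(λ, s)` and `(λ, μ_1, …, μ_r)` have the same Brauer negativity
`N(Λ) = min {δ ≥ 0 : (λ_1 + δ, λ_2, …, λ_n) realizable}`. -/
theorem same_brauer_negativity (lam : ℝ) (hlam : 0 ≤ lam) (r : ℕ)
    (μ : Fin r → ℝ) (hμ : ∀ j, μ j < 0) (s : ℝ) (hs : s = ∑ j, μ j) (hs0 : s < 0) :
    (∀ δ : ℝ, 0 ≤ δ →
      (RealRealizable ![lam + δ, s] ↔ RealRealizable (Fin.cons (lam + δ) μ))) ∧
    sInf {δ : ℝ | 0 ≤ δ ∧ RealRealizable ![lam + δ, s]} =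
      sInf {δ : ℝ | 0 ≤ δ ∧ RealRealizable (Fin.cons (lam + δ) μ)} :=
  same_brauer_negativity_general lam r μ hμ s hs hs0
end
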